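/- arXiv:1207.0172 — 13 statements merged into one kernel-verified Lean document; each statement's English description precedes it below -/
import Mathlib

section
/- An odd prime p ≠ 7 can be written as p = a² + 7b² with integers a, b if and only if p ≡ j² (mod 14) for some j ∈ {1, 3, 5}. -/
/-!
For `p ∤ 14`, a representation `p = a² + 7b²` makes `p ≡ a²` a nonzero square mod 7, which
together with `p` odd is the residue condition mod 14. Conversely, if `p` is a square mod 7,
quadratic reciprocity makes `-7` a square `t²` mod `p`. Thue's lemma gives a nonzero `(x, y)`
with `|x|, |y| ≤ ⌊√p⌋ < √p` and `x ≡ t y (mod p)`, so `x² + 7y² = k p` with `0 < k < 8`.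
The cases `k = 2, 6` are impossible mod 8 and `k = 4` forces `x, y` even; `k = 3, 5` are
impossible because `-7` is not a square mod 3 or 5; for `k = 7`, `7 ∣ x` and
`p = y² + 7 (x / 7)²`.
-/

theorem legendreSym.at_neg_prime_of_mod_four_eq_three {p q : ℕ} [Fact p.Prime] [Fact q.Prime]
    (hp : p ≠ 2) (hq : q % 4 = 3) : legendreSym p (-q) = legendreSym q p := by
  rw [neg_eq_neg_one_mul, legendreSym.mul, legendreSym.at_neg_one hp]
  have hq2 : q ≠ 2 := by omega
  rcases Nat.odd_mod_four_iff.mp ((Nat.Prime.mod_two_eq_one_iff_ne_two Fact.out).mpr hp) with h | h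
  · rw [ZMod.χ₄_nat_one_mod_four h, one_mul, legendreSym.quadratic_reciprocity_one_mod_four h hq2]
  · rw [ZMod.χ₄_nat_three_mod_four h, legendreSym.quadratic_reciprocity_three_mod_four hq h,
      neg_one_mul, neg_neg]

theorem ZMod.isSquare_neg_prime_iff_of_mod_four_eq_three {p q : ℕ} [Fact p.Prime] [Fact q.Prime]
    (hp : p ≠ 2) (hq : q % 4 = 3) (hpq : p ≠ q) :
    IsSquare (-q : ZMod p) ↔ IsSquare (p : ZMod q) := by
  have hqp : ((-q : ℤ) : ZMod p) ≠ 0 := by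
    simpa using ZMod.prime_ne_zero p q hpq
  rw [← legendreSym.eq_one_iff' q (ZMod.prime_ne_zero q p hpq.symm),
    ← legendreSym.at_neg_prime_of_mod_four_eq_three hp hq, legendreSym.eq_one_iff p hqp]
  push_cast
  rfl

-- Thue's lemma: pigeonhole on the `(⌊√n⌋ + 1)²` values `i - t j`.
theorem ZMod.exists_abs_le_sqrt_intCast_eq_mul (n : ℕ) [NeZero n] (t : ZMod n) :
    ∃ x y : ℤ, (x, y) ≠ 0 ∧ |x| ≤ n.sqrt ∧ |y| ≤ n.sqrt ∧ (x : ZMod n) = t * y := by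
  set s := n.sqrt
  have hcard : Fintype.card (ZMod n) < Fintype.card (Fin (s + 1) × Fin (s + 1)) := by
    simpa [ZMod.card, ← sq] using Nat.lt_succ_sqrt' n
  obtain ⟨⟨i, j⟩, ⟨i', j'⟩, hne, heq⟩ :=
    Fintype.exists_ne_map_eq_of_card_lt (fun ij => ((ij.1 : ℕ) : ZMod n) - t * (ij.2 : ℕ)) hcard
  refine ⟨(i : ℤ) - i', (j : ℤ) - j', ?_, ?_, ?_, ?_⟩
  · contrapose! hne
    simp only [Prod.mk_eq_zero, sub_eq_zero, Nat.cast_inj, Fin.val_inj] at hne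
    rw [hne.1, hne.2]
  · have := i.isLt; have := i'.isLt
    exact abs_le.mpr ⟨by omega, by omega⟩
  · have := j.isLt; have := j'.isLt
    exact abs_le.mpr ⟨by omega, by omega⟩
  · push_cast
    linear_combination heq

theorem Int.eight_dvd_or_two_dvd_of_two_dvd_sq_add_seven_sq {x y : ℤ}
    (h : 2 ∣ x ^ 2 + 7 * y ^ 2) : 8 ∣ x ^ 2 + 7 * y ^ 2 ∨ (2 ∣ x ∧ 2 ∣ y) := by
  rw [← even_iff_two_dvd] at h
  rcases x.even_or_odd with hx | hx <;> rcases y.even_or_odd with hy | hy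
  · exact Or.inr ⟨hx.two_dvd, hy.two_dvd⟩
  · simp [parity_simps, hx, Int.not_even_iff_odd.mpr hy] at h
    exact absurd h (by decide)
  · simp [parity_simps, hy, Int.not_even_iff_odd.mpr hx] at h
  · left
    rw [show x ^ 2 + 7 * y ^ 2 = (x ^ 2 - 1) + 7 * (y ^ 2 - 1) + 8 by ring]
    exact dvd_add (dvd_add (Int.eight_dvd_sq_sub_one_of_odd hx)
      ((Int.eight_dvd_sq_sub_one_of_odd hy).mul_left 7)) (dvd_refl 8)

theorem Int.dvd_and_dvd_of_dvd_sq_add_mul_sq {q : ℕ} [Fact q.Prime] {d x y : ℤ}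
    (hd : ¬IsSquare (-d : ZMod q)) (h : (q : ℤ) ∣ x ^ 2 + d * y ^ 2) :
    (q : ℤ) ∣ x ∧ (q : ℤ) ∣ y := by
  simp only [← ZMod.intCast_zmod_eq_zero_iff_dvd] at h ⊢
  push_cast at h
  by_cases hy : (y : ZMod q) = 0
  · rw [hy, zero_pow two_ne_zero, mul_zero, add_zero, sq_eq_zero_iff] at h
    exact ⟨h, hy⟩
  · refine absurd ⟨x / y, ?_⟩ hd
    field_simp
    linear_combination -h

theorem Int.dvd_of_prime_mul_eq_sq_add_mul_sq {q : ℕ} [Fact q.Prime] {d x y n : ℤ}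
    (hd : ¬IsSquare (-d : ZMod q)) (h : q * n = x ^ 2 + d * y ^ 2) : (q : ℤ) ∣ n := by
  obtain ⟨⟨u, rfl⟩, ⟨v, rfl⟩⟩ := Int.dvd_and_dvd_of_dvd_sq_add_mul_sq hd ⟨n, h.symm⟩
  have hq : (q : ℤ) ≠ 0 := by exact_mod_cast (Fact.out : q.Prime).ne_zero
  refine ⟨u ^ 2 + d * v ^ 2, mul_left_cancel₀ hq ?_⟩
  linear_combination h

theorem Int.exists_eq_sq_add_mul_sq_of_prime_mul {d : ℕ} (hd : d.Prime) {x y n : ℤ}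
    (h : d * n = x ^ 2 + d * y ^ 2) : ∃ a b : ℤ, n = a ^ 2 + d * b ^ 2 := by
  have hdx : (d : ℤ) ∣ x := (Nat.prime_iff_prime_int.mp hd).dvd_of_dvd_pow (n := 2)
    ⟨n - y ^ 2, by linear_combination -h⟩
  obtain ⟨u, rfl⟩ := hdx
  have hd0 : (d : ℤ) ≠ 0 := by exact_mod_cast hd.ne_zero
  exact ⟨y, u, mul_left_cancel₀ hd0 (by linear_combination h)⟩

theorem Nat.Prime.exists_eq_sq_add_seven_sq_of_mul {p : ℕ} (hp : p.Prime) (hodd : Odd p)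
    (h3 : p ≠ 3) (h5 : p ≠ 5) {k x y : ℤ} (hk0 : 0 < k) (hk8 : k < 8)
    (h : k * p = x ^ 2 + 7 * y ^ 2) : ∃ a b : ℤ, (p : ℤ) = a ^ 2 + 7 * b ^ 2 := by
  have hp2 : (p : ℤ) % 2 = 1 := by have := Nat.odd_iff.mp hodd; omega
  have not_dvd {q : ℕ} (hq : q.Prime) (hpq : p ≠ q) : ¬(q : ℤ) ∣ p := by
    rw [Int.natCast_dvd_natCast, Nat.prime_dvd_prime_iff_eq hq hp]
    exact Ne.symm hpq
  have nonsq3 : ¬IsSquare (-((7 : ℤ) : ZMod 3)) := by decide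
  have nonsq5 : ¬IsSquare (-((7 : ℤ) : ZMod 5)) := by decide
  have : Fact (Nat.Prime 3) := ⟨Nat.prime_three⟩
  have : Fact (Nat.Prime 5) := ⟨Nat.prime_five⟩
  have parity (m : ℤ) (hm : k = 2 * m) := Int.eight_dvd_or_two_dvd_of_two_dvd_sq_add_seven_sq
    (show 2 ∣ x ^ 2 + 7 * y ^ 2 from ⟨m * p, by rw [← h, hm]; ring⟩)
  interval_cases k
  · exact ⟨x, y, by linarith⟩
  · rcases parity 1 rfl with h8 | ⟨⟨u, rfl⟩, ⟨v, rfl⟩⟩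
    · omega
    · have : (p : ℤ) = 2 * (u ^ 2 + 7 * v ^ 2) := by linarith
      omega
  · exact absurd (Int.dvd_of_prime_mul_eq_sq_add_mul_sq (q := 3) (d := 7) nonsq3 h)
      (not_dvd Nat.prime_three h3)
  · rcases parity 2 rfl with h8 | ⟨⟨u, rfl⟩, ⟨v, rfl⟩⟩
    · omega
    · exact ⟨u, v, by linarith⟩
  · exact absurd (Int.dvd_of_prime_mul_eq_sq_add_mul_sq (q := 5) (d := 7) nonsq5 h)
      (not_dvd Nat.prime_five h5)
  · rcases parity 3 rfl with h8 | ⟨⟨u, rfl⟩, ⟨v, rfl⟩⟩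
    · omega
    · have : 3 * (p : ℤ) = 2 * (u ^ 2 + 7 * v ^ 2) := by linarith
      omega
  · exact Int.exists_eq_sq_add_mul_sq_of_prime_mul (d := 7) (by norm_num) h

theorem Nat.Prime.exists_eq_sq_add_seven_sq {p : ℕ} (hp : p.Prime) (hodd : Odd p)
    (h3 : p ≠ 3) (h5 : p ≠ 5) (hsq : IsSquare (-7 : ZMod p)) :
    ∃ a b : ℤ, (p : ℤ) = a ^ 2 + 7 * b ^ 2 := by
  have : Fact p.Prime := ⟨hp⟩
  obtain ⟨t, ht⟩ := hsq
  obtain ⟨x, y, hxy0, hx, hy, hxy⟩ := ZMod.exists_abs_le_sqrt_intCast_eq_mul p t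
  obtain ⟨k, hk⟩ : (p : ℤ) ∣ x ^ 2 + 7 * y ^ 2 := by
    rw [← ZMod.intCast_zmod_eq_zero_iff_dvd]
    push_cast
    linear_combination (x + t * y) * hxy - y ^ 2 * ht
  have hsqrt : (p.sqrt : ℤ) ^ 2 < p := by
    have hle : p.sqrt ^ 2 ≤ p := Nat.sqrt_le' p
    have hne : p.sqrt ^ 2 ≠ p := fun h =>
      (Nat.prime_iff.mp hp).not_isSquare ⟨p.sqrt, by rw [← sq, h]⟩
    exact_mod_cast lt_of_le_of_ne hle hne
  have hpos : 0 < x ^ 2 + 7 * y ^ 2 := by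
    rcases not_and_or.mp (mt Prod.mk_eq_zero.mpr hxy0) with h | h <;> positivity
  have hlt : x ^ 2 + 7 * y ^ 2 < 8 * p := by
    have hx2 : x ^ 2 ≤ (p.sqrt : ℤ) ^ 2 := sq_le_sq' (abs_le.mp hx).1 (abs_le.mp hx).2
    have hy2 : y ^ 2 ≤ (p.sqrt : ℤ) ^ 2 := sq_le_sq' (abs_le.mp hy).1 (abs_le.mp hy).2
    linarith
  have hp0 : (0 : ℤ) < p := by exact_mod_cast hp.pos
  exact hp.exists_eq_sq_add_seven_sq_of_mul hodd h3 h5 (k := k) (by nlinarith) (by nlinarith)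
    (by rw [hk, mul_comm])

theorem exists_mem_sq_emod_fourteen_iff {n : ℕ} (hn : Odd n) (h7 : (n : ZMod 7) ≠ 0) :
    (∃ j ∈ ({1, 3, 5} : Finset ℕ), n % 14 = j ^ 2 % 14) ↔ IsSquare (n : ZMod 7) := by
  have hcast : (n : ZMod 7) = ((n % 14 : ℕ) : ZMod 7) := by
    rw [← ZMod.natCast_mod n 7, ← Nat.mod_mod_of_dvd n (by norm_num : 7 ∣ 14), ZMod.natCast_mod]
  have hodd : n % 14 % 2 = 1 := by have := Nat.odd_iff.mp hn; omega
  rw [hcast] at h7 ⊢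
  have hlt : n % 14 < 14 := Nat.mod_lt n (by norm_num)
  generalize n % 14 = r at *
  interval_cases r <;> revert hodd h7 <;> decide

theorem stmt_0 (p : ℕ) (hp : p.Prime) (hodd : Odd p) (h7 : p ≠ 7) :
    (∃ a b : ℤ, (p : ℤ) = a ^ 2 + 7 * b ^ 2) ↔
    (∃ j ∈ ({1, 3, 5} : Finset ℕ), p % 14 = j ^ 2 % 14) := by
  have : Fact p.Prime := ⟨hp⟩
  have hp7 : (p : ZMod 7) ≠ 0 := by
    rw [ne_eq, ZMod.natCast_eq_zero_iff, Nat.prime_dvd_prime_iff_eq (by norm_num) hp]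
    exact Ne.symm h7
  rw [exists_mem_sq_emod_fourteen_iff hodd hp7]
  constructor
  · rintro ⟨a, b, h⟩
    refine ⟨a, ?_⟩
    have := congrArg (Int.cast : ℤ → ZMod 7) h
    push_cast at this
    rw [this, show (7 : ZMod 7) = 0 from rfl]
    ring
  · intro hsq
    have h3 : p ≠ 3 := by rintro rfl; revert hsq; decide
    have h5 : p ≠ 5 := by rintro rfl; revert hsq; decide
    have : Fact (Nat.Prime 7) := ⟨by norm_num⟩
    have hp2 : p ≠ 2 := by rintro rfl; exact absurd hodd (by decide)
    refine hp.exists_eq_sq_add_seven_sq hodd h3 h5 ?_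
    exact_mod_cast (ZMod.isSquare_neg_prime_iff_of_mod_four_eq_three hp2 (by norm_num) h7).mpr hsq
end

section
/- A prime p can be written as p = a² + 3b² with integers a, b if and only if p = 3 or p ≡ 1 (mod 6). -/
/-!
Necessity is a congruence check: `a² + 3b²` is never `2` modulo `3` or modulo `4`.
For sufficiency, `p ≡ 1 (mod 6)` gives a primitive cube root of unity `ω` in `ZMod p`, and
`(2ω + 1)² = -3`, so `p ∣ c² + 3` for some `c`. Thue's lemma then yields a nonzero `(x, y)`
with `|x|, |y| < √p` and `x ≡ c y (mod p)`, whence `x² + 3y² = k p` with `0 < k < 4`;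
`k = 2` is impossible modulo `4`, and for `k = 3` we get `3 ∣ x` and divide by `3`.
-/

theorem IsPrimitiveRoot.two_mul_add_one_sq_eq_neg_three {R : Type*} [CommRing R] [IsDomain R]
    {ω : R} (hω : IsPrimitiveRoot ω 3) : (2 * ω + 1) ^ 2 = -3 := by
  have h := hω.geom_sum_eq_zero (by norm_num)
  simp only [Finset.sum_range_succ, Finset.sum_range_zero] at h
  linear_combination 4 * h

theorem FiniteField.isSquare_neg_three {F : Type*} [Field F] [Fintype F]
    (h : 3 ∣ Fintype.card F - 1) : IsSquare (-3 : F) := by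
  classical
  obtain ⟨ω, hω⟩ := exists_prime_orderOf_dvd_card (G := Fˣ) 3 (by rwa [Fintype.card_units])
  have hω' : IsPrimitiveRoot (ω : F) 3 :=
    IsPrimitiveRoot.coe_units_iff.mpr (hω ▸ IsPrimitiveRoot.orderOf ω)
  exact ⟨2 * ω + 1, by rw [← sq, hω'.two_mul_add_one_sq_eq_neg_three]⟩

theorem Int.sq_add_three_mul_sq_emod_three_ne_two (x y : ℤ) : (x ^ 2 + 3 * y ^ 2) % 3 ≠ 2 := by
  intro h
  have h' := ZMod.intCast_mod (x ^ 2 + 3 * y ^ 2) 3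
  rw [Nat.cast_ofNat, h] at h'
  push_cast at h'
  generalize (x : ZMod 3) = s, (y : ZMod 3) = t at h'
  revert s t
  decide

theorem Int.sq_add_three_mul_sq_emod_four_ne_two (x y : ℤ) : (x ^ 2 + 3 * y ^ 2) % 4 ≠ 2 := by
  intro h
  have h' := ZMod.intCast_mod (x ^ 2 + 3 * y ^ 2) 4
  rw [Nat.cast_ofNat, h] at h'
  push_cast at h'
  generalize (x : ZMod 4) = s, (y : ZMod 4) = t at h'
  revert s t
  decide

/-- Thue's lemma. -/
theorem Int.exists_dvd_sub_mul_abs_le_sqrt (m : ℕ) [NeZero m] (c : ℤ) :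
    ∃ x y : ℤ, (x ≠ 0 ∨ y ≠ 0) ∧ |x| ≤ m.sqrt ∧ |y| ≤ m.sqrt ∧ (m : ℤ) ∣ x - c * y := by
  have hcard : Fintype.card (ZMod m) < Fintype.card (Fin (m.sqrt + 1) × Fin (m.sqrt + 1)) := by
    simpa [ZMod.card, ← sq] using Nat.lt_succ_sqrt' m
  obtain ⟨⟨i₁, j₁⟩, ⟨i₂, j₂⟩, hne, heq⟩ := Fintype.exists_ne_map_eq_of_card_lt
    (fun ij : Fin (m.sqrt + 1) × Fin (m.sqrt + 1) => ((ij.1 : ℕ) : ZMod m) - c * (ij.2 : ℕ)) hcard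
  refine ⟨(i₁ : ℤ) - i₂, (j₁ : ℤ) - j₂, ?_, ?_, ?_, ?_⟩
  · by_contra! h
    obtain rfl : i₁ = i₂ := Fin.ext (by omega)
    obtain rfl : j₁ = j₂ := Fin.ext (by omega)
    exact hne rfl
  · rw [abs_le]; omega
  · rw [abs_le]; omega
  · rw [← ZMod.intCast_zmod_eq_zero_iff_dvd]
    push_cast
    linear_combination heq

theorem Int.exists_sq_add_mul_sq_dvd_of_dvd_sq_add (m : ℕ) [NeZero m] (hm : ¬IsSquare m)
    {c d : ℤ} (hd : 0 < d) (hc : (m : ℤ) ∣ c ^ 2 + d) :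
    ∃ x y : ℤ, 0 < x ^ 2 + d * y ^ 2 ∧ x ^ 2 + d * y ^ 2 < (d + 1) * m ∧
      (m : ℤ) ∣ x ^ 2 + d * y ^ 2 := by
  obtain ⟨x, y, hxy, hx, hy, hdvd⟩ := exists_dvd_sub_mul_abs_le_sqrt m c
  have hsqrt : (m.sqrt : ℤ) ^ 2 < m := by
    exact_mod_cast (Nat.sqrt_le' m).lt_of_ne fun h => hm ⟨m.sqrt, h.symm.trans (sq _)⟩
  have hx2 : x ^ 2 ≤ (m.sqrt : ℤ) ^ 2 := sq_abs x ▸ pow_le_pow_left₀ (abs_nonneg x) hx 2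
  have hy2 : y ^ 2 ≤ (m.sqrt : ℤ) ^ 2 := sq_abs y ▸ pow_le_pow_left₀ (abs_nonneg y) hy 2
  refine ⟨x, y, ?_, by nlinarith, ?_⟩
  · rcases hxy with hx0 | hy0 <;> positivity
  · have hfactor : x ^ 2 + d * y ^ 2 = (x - c * y) * (x + c * y) + (c ^ 2 + d) * y ^ 2 := by ring
    rw [hfactor]
    exact dvd_add (hdvd.mul_right _) (hc.mul_right _)

theorem Int.exists_eq_sq_add_three_mul_sq_of_dvd {p x y : ℤ} (hp : p % 2 = 1)
    (hdvd : p ∣ x ^ 2 + 3 * y ^ 2) (hpos : 0 < x ^ 2 + 3 * y ^ 2)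
    (hlt : x ^ 2 + 3 * y ^ 2 < 4 * p) : ∃ a b : ℤ, p = a ^ 2 + 3 * b ^ 2 := by
  obtain ⟨k, hk⟩ := hdvd
  have hk0 : 0 < k := by nlinarith
  have hk4 : k < 4 := by nlinarith
  interval_cases k
  · exact ⟨x, y, by linarith⟩
  · have := sq_add_three_mul_sq_emod_four_ne_two x y
    omega
  · obtain ⟨z, rfl⟩ : 3 ∣ x := Int.prime_three.dvd_of_dvd_pow (n := 2) ⟨p - y ^ 2, by linarith⟩
    exact ⟨y, z, by linarith⟩

theorem stmt_2 (p : ℕ) (hp : p.Prime) :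
    (∃ a b : ℤ, (p : ℤ) = a ^ 2 + 3 * b ^ 2) ↔
    (p = 3 ∨ p % 6 = 1) := by
  constructor
  · rintro ⟨a, b, h⟩
    have h3 := Int.sq_add_three_mul_sq_emod_three_ne_two a b
    have h4 := Int.sq_add_three_mul_sq_emod_four_ne_two a b
    rw [← h] at h3 h4
    by_cases h2p : 2 ∣ p
    · have := (Nat.prime_dvd_prime_iff_eq Nat.prime_two hp).mp h2p
      omega
    by_cases h3p : 3 ∣ p
    · exact Or.inl ((Nat.prime_dvd_prime_iff_eq Nat.prime_three hp).mp h3p).symm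
    omega
  · rintro (rfl | h6)
    · exact ⟨0, 1, by norm_num⟩
    have := Fact.mk hp
    have := NeZero.mk hp.ne_zero
    obtain ⟨z, hz⟩ := FiniteField.isSquare_neg_three (F := ZMod p) (by rw [ZMod.card]; omega)
    have hc : (p : ℤ) ∣ (z.val : ℤ) ^ 2 + 3 := by
      rw [← ZMod.intCast_zmod_eq_zero_iff_dvd]
      push_cast
      rw [ZMod.natCast_zmod_val, sq, ← neg_eq_iff_add_eq_zero, ← hz, neg_neg]
    obtain ⟨x, y, hpos, hlt, hdvd⟩ :=
      Int.exists_sq_add_mul_sq_dvd_of_dvd_sq_add p hp.prime.not_isSquare (by norm_num) hc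
    exact Int.exists_eq_sq_add_three_mul_sq_of_dvd (by omega) hdvd hpos (by linarith)
end

section
/- A prime p can be written as p = a² + 5b² with integers a, b if and only if p = 5 or p ≡ 1 (mod 20) or p ≡ 9 (mod 20). -/
/-!
Reduction mod 20 shows that a prime of the form `a² + 5b²` is `5` or `≡ 1, 9 (mod 20)`.
Conversely, for such `p` both `-1` and (by quadratic reciprocity) `5` are squares mod `p`,
so `z² ≡ -5 (mod p)` for some `z`. Thue's lemma gives `x ≡ z y (mod p)` with `x², y² < p`,
hence `x² + 5y² = k p` with `0 < k < 6`. Reduction mod 20 rules out `k = 2, 3`; for `k = 4`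
both `x, y` are even and for `k = 5` we have `5 ∣ x`, and dividing out gives `p = a² + 5b²`.
-/

/-- Thue's lemma: pigeonhole on the values `i - z j` mod `n` for `0 ≤ i, j ≤ ⌊√n⌋`,
of which there are `(⌊√n⌋ + 1)² > n`. -/
theorem Int.exists_sq_lt_dvd_sub_mul (n : ℕ) (hn : ¬IsSquare n) (z : ℤ) :
    ∃ x y : ℤ, (x, y) ≠ (0, 0) ∧ x ^ 2 < n ∧ y ^ 2 < n ∧ (n : ℤ) ∣ x - z * y := by
  have : NeZero n := ⟨by rintro rfl; exact hn ⟨0, rfl⟩⟩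
  set m := Nat.sqrt n
  have hm : m * m < n := (Nat.sqrt_le n).lt_of_ne fun h => hn ⟨m, h.symm⟩
  have hcard : (Finset.univ : Finset (ZMod n)).card <
      (Finset.range (m + 1) ×ˢ Finset.range (m + 1)).card := by
    rw [Finset.card_product, Finset.card_range, Finset.card_univ, ZMod.card]
    exact Nat.lt_succ_sqrt n
  obtain ⟨a, ha, b, hb, hab, heq⟩ := Finset.exists_ne_map_eq_of_card_lt_of_maps_to hcard
    (fun q _ => Finset.mem_univ ((q.1 : ℤ) - z * q.2 : ZMod n))
  simp only [Finset.mem_product, Finset.mem_range] at ha hb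
  have hdiff : ∀ i j : ℕ, i < m + 1 → j < m + 1 → ((i : ℤ) - j) ^ 2 < n := fun i j hi hj =>
    (sq_le_sq' (b := (m : ℤ)) (by omega) (by omega)).trans_lt (by rw [sq]; exact_mod_cast hm)
  refine ⟨a.1 - b.1, a.2 - b.2, ?_, hdiff _ _ ha.1 hb.1, hdiff _ _ ha.2 hb.2, ?_⟩
  · intro h
    simp only [Prod.mk.injEq, sub_eq_zero, Nat.cast_inj] at h
    exact hab (Prod.ext h.1 h.2)
  · rw [← ZMod.intCast_zmod_eq_zero_iff_dvd]
    push_cast at heq ⊢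
    linear_combination heq

theorem ZMod.isSquare_five {p : ℕ} [Fact p.Prime] (hp : p % 5 = 1 ∨ p % 5 = 4) :
    IsSquare (5 : ZMod p) := by
  have : Fact (Nat.Prime 5) := ⟨Nat.prime_five⟩
  have h := ZMod.exists_sq_eq_prime_iff_of_mod_four_eq_one (p := 5) (q := p) rfl (by omega)
  rw [Nat.cast_ofNat] at h
  rw [← h, ← ZMod.natCast_mod]
  rcases hp with hp | hp <;> rw [hp]
  exacts [⟨1, rfl⟩, ⟨2, rfl⟩]

theorem ZMod.isSquare_neg_five {p : ℕ} [Fact p.Prime] (hp : p % 20 = 1 ∨ p % 20 = 9) :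
    IsSquare (-5 : ZMod p) := by
  have hneg_one : IsSquare (-1 : ZMod p) := ZMod.exists_sq_eq_neg_one_iff.mpr (by omega)
  have h := hneg_one.mul (ZMod.isSquare_five (p := p) (by omega))
  rwa [neg_one_mul] at h

theorem exists_sq_add_five_mul_sq_eq_mul (n : ℕ) (hn : ¬IsSquare n)
    (h5 : IsSquare (-5 : ZMod n)) :
    ∃ x y k : ℤ, 0 < k ∧ k < 6 ∧ x ^ 2 + 5 * y ^ 2 = k * n := by
  obtain ⟨c, hc⟩ := h5
  set z : ℤ := c.cast
  have hz : (n : ℤ) ∣ z ^ 2 + 5 := by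
    rw [← ZMod.intCast_zmod_eq_zero_iff_dvd]
    push_cast
    rw [ZMod.intCast_zmod_cast, sq, ← hc, neg_add_cancel]
  obtain ⟨x, y, hxy, hx, hy, hdvd⟩ := Int.exists_sq_lt_dvd_sub_mul n hn z
  obtain ⟨k, hk⟩ : (n : ℤ) ∣ x ^ 2 + 5 * y ^ 2 := by
    have : x ^ 2 + 5 * y ^ 2 = (x - z * y) * (x + z * y) + (z ^ 2 + 5) * y ^ 2 := by ring
    rw [this]
    exact (hdvd.mul_right _).add (hz.mul_right _)
  have hpos : 0 < x ^ 2 + 5 * y ^ 2 := by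
    rcases eq_or_ne x 0 with rfl | _
    · have hy0 : y ≠ 0 := fun h => hxy (by rw [h])
      positivity
    · positivity
  have hn0 : (0 : ℤ) < n := by linarith
  refine ⟨x, y, k, ?_, ?_, by rw [hk, mul_comm]⟩ <;> nlinarith

theorem sq_add_five_mul_sq_emod_twenty (a b : ℤ) :
    (a ^ 2 + 5 * b ^ 2) % 20 ∈ ({0, 1, 4, 5, 6, 9, 10, 14, 16} : Finset ℤ) := by
  have hzmod : ∀ u v : ZMod 20, (u ^ 2 + 5 * v ^ 2).val ∈
      ({0, 1, 4, 5, 6, 9, 10, 14, 16} : Finset ℕ) := by decide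
  have h := ZMod.val_intCast (n := 20) (a ^ 2 + 5 * b ^ 2)
  have hab := hzmod a b
  push_cast at h
  simp only [Finset.mem_insert, Finset.mem_singleton] at hab ⊢
  omega

theorem two_dvd_of_four_dvd_sq_add_five_mul_sq {x y : ℤ} (h : 4 ∣ x ^ 2 + 5 * y ^ 2) :
    2 ∣ x ∧ 2 ∣ y := by
  rcases Int.even_or_odd' x with ⟨m, rfl | rfl⟩ <;>
    rcases Int.even_or_odd' y with ⟨n, rfl | rfl⟩ <;> ring_nf at h <;> omega

theorem exists_sq_add_five_mul_sq_of_eq_mul {p : ℕ} (hp : p % 20 = 1 ∨ p % 20 = 9)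
    {x y k : ℤ} (hk0 : 0 < k) (hk6 : k < 6) (h : x ^ 2 + 5 * y ^ 2 = k * p) :
    ∃ a b : ℤ, (p : ℤ) = a ^ 2 + 5 * b ^ 2 := by
  have hmod := sq_add_five_mul_sq_emod_twenty x y
  rw [h] at hmod
  simp only [Finset.mem_insert, Finset.mem_singleton] at hmod
  interval_cases k
  · exact ⟨x, y, by linarith⟩
  · omega
  · omega
  · obtain ⟨⟨a, rfl⟩, ⟨b, rfl⟩⟩ := two_dvd_of_four_dvd_sq_add_five_mul_sq ⟨p, h⟩
    exact ⟨a, b, by linarith⟩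
  · have hx : (5 : ℤ) ∣ x ^ 2 := ⟨p - y ^ 2, by linarith⟩
    obtain ⟨a, rfl⟩ := Int.Prime.dvd_pow' (p := 5) Nat.prime_five hx
    exact ⟨y, a, by push_cast at h; linarith⟩

theorem stmt_4 (p : ℕ) (hp : p.Prime) :
    (∃ a b : ℤ, (p : ℤ) = a ^ 2 + 5 * b ^ 2) ↔
    (p = 5 ∨ p % 20 = 1 ∨ p % 20 = 9) := by
  have : Fact p.Prime := ⟨hp⟩
  constructor
  · rintro ⟨a, b, hab⟩
    have hmod := sq_add_five_mul_sq_emod_twenty a b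
    rw [← hab] at hmod
    simp only [Finset.mem_insert, Finset.mem_singleton] at hmod
    have h2 := hp.eq_one_or_self_of_dvd 2
    have h5 := hp.eq_one_or_self_of_dvd 5
    omega
  · rintro (rfl | h20)
    · exact ⟨0, 1, by norm_num⟩
    · obtain ⟨x, y, k, hk0, hk6, h⟩ := exists_sq_add_five_mul_sq_eq_mul p hp.prime.not_isSquare
        (ZMod.isSquare_neg_five h20)
      exact exists_sq_add_five_mul_sq_of_eq_mul h20 hk0 hk6 h
end

section
/- A prime p can be written as p = a² + 6b² with integers a, b if and only if p ≡ 1 (mod 24) or p ≡ 7 (mod 24). -/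
/-!
Reducing modulo 24, the values of `a ^ 2 + 6 * b ^ 2` prime to 6 are `1` and `7`.

Conversely, if `p ≡ 1, 7 [MOD 24]` then `J(-6 | p)` depends only on `p % 24` and equals `1`,
so `p ∣ x ^ 2 + 6` for some `x`. Thue's lemma (pigeonhole on `a - x * b` for `0 ≤ a, b ≤ ⌊√p⌋`)
gives `(a, b) ≠ 0` with `a ^ 2, b ^ 2 < p` and `a ≡ x * b [ZMOD p]`, so `a ^ 2 + 6 * b ^ 2 = k * p`
with `1 ≤ k ≤ 6`. For `k = 2, 3, 5` this would make `p` of the form `2 * x ^ 2 + 3 * y ^ 2`,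
impossible as `p ≡ 1 [MOD 3]`; for `k = 4, 6` one divides out and gets `p = c ^ 2 + 6 * d ^ 2`.
-/

open scoped NumberTheorySymbols

theorem Nat.Prime.mod_twentyFour_of_eq_sq_add_six_mul_sq {p : ℕ} (hp : p.Prime) {a b : ℤ}
    (h : (p : ℤ) = a ^ 2 + 6 * b ^ 2) : p % 24 = 1 ∨ p % 24 = 7 := by
  have hres : ∀ u v : ZMod 24,
      (u ^ 2 + 6 * v ^ 2).val ∈ ({0, 1, 4, 6, 7, 9, 10, 12, 15, 16, 18, 22} : Finset ℕ) := by
    decide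
  have hcast : (p : ZMod 24) = (a : ZMod 24) ^ 2 + 6 * (b : ZMod 24) ^ 2 := by
    exact_mod_cast congrArg (Int.cast : ℤ → ZMod 24) h
  have hmod := hres a b
  rw [← hcast, ZMod.val_natCast] at hmod
  simp only [Finset.mem_insert, Finset.mem_singleton] at hmod
  have h2 := hp.eq_two_or_odd
  have h3 : p = 3 ∨ ¬ 3 ∣ p := by
    by_cases h3 : 3 ∣ p
    · exact .inl ((Nat.prime_dvd_prime_iff_eq Nat.prime_three hp).mp h3).symm
    · exact .inr h3
  omega

theorem jacobiSym_neg_six_eq_one {n : ℕ} (hn : n % 24 = 1 ∨ n % 24 = 7) : J(-6 | n) = 1 := by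
  have hodd : Odd n := Nat.odd_iff.mpr (by omega)
  rw [jacobiSym.mod_right _ hodd, show 4 * (-6 : ℤ).natAbs = 24 from rfl]
  rcases hn with hn | hn <;> rw [hn] <;> norm_num

theorem exists_dvd_sq_add_six {p : ℕ} [Fact p.Prime] (hp : p % 24 = 1 ∨ p % 24 = 7) :
    ∃ x : ℤ, (p : ℤ) ∣ x ^ 2 + 6 := by
  have hleg : legendreSym p (-6) = 1 := by
    rw [jacobiSym.legendreSym.to_jacobiSym]
    exact jacobiSym_neg_six_eq_one hp
  have hne : ((-6 : ℤ) : ZMod p) ≠ 0 := fun h0 => by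
    rw [(legendreSym.eq_zero_iff p _).mpr h0] at hleg
    exact zero_ne_one hleg
  obtain ⟨s, hs⟩ := (legendreSym.eq_one_iff p hne).mp hleg
  obtain ⟨x, rfl⟩ := ZMod.intCast_surjective s
  refine ⟨x, (ZMod.intCast_zmod_eq_zero_iff_dvd _ p).mp ?_⟩
  push_cast at hs ⊢
  linear_combination -hs

theorem exists_abs_le_dvd_sub_mul (n r : ℕ) [NeZero n] (hr : n < (r + 1) ^ 2) (x : ℤ) :
    ∃ a b : ℤ, (a ≠ 0 ∨ b ≠ 0) ∧ |a| ≤ r ∧ |b| ≤ r ∧ (n : ℤ) ∣ a - x * b := by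
  have hcard : Fintype.card (ZMod n) < Fintype.card (Fin (r + 1) × Fin (r + 1)) := by
    simpa [ZMod.card, sq] using hr
  obtain ⟨u, v, huv, hfe⟩ := Fintype.exists_ne_map_eq_of_card_lt
    (fun ij : Fin (r + 1) × Fin (r + 1) => ((ij.1 : ℕ) : ZMod n) - x * ((ij.2 : ℕ) : ZMod n)) hcard
  refine ⟨(u.1 : ℤ) - v.1, (u.2 : ℤ) - v.2, ?_, ?_, ?_, ?_⟩
  · by_contra! h
    exact huv (Prod.ext (Fin.ext (by omega)) (Fin.ext (by omega)))
  · rw [abs_le]; omega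
  · rw [abs_le]; omega
  · rw [← ZMod.intCast_zmod_eq_zero_iff_dvd]
    push_cast
    linear_combination hfe

theorem Nat.Prime.exists_sq_lt_dvd_sub_mul {p : ℕ} (hp : p.Prime) (x : ℤ) :
    ∃ a b : ℤ, (a ≠ 0 ∨ b ≠ 0) ∧ a ^ 2 < p ∧ b ^ 2 < p ∧ (p : ℤ) ∣ a - x * b := by
  have : NeZero p := ⟨hp.ne_zero⟩
  obtain ⟨a, b, hab, ha, hb, hdvd⟩ := exists_abs_le_dvd_sub_mul p p.sqrt (Nat.lt_succ_sqrt' p) x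
  have hsqrt : (p.sqrt : ℤ) ^ 2 < p := by
    have hne : p.sqrt ^ 2 ≠ p := fun h => Nat.Prime.not_prime_pow le_rfl (h ▸ hp)
    exact_mod_cast (Nat.sqrt_le' p).lt_of_ne hne
  refine ⟨a, b, hab, ?_, ?_, hdvd⟩
  · rw [← sq_abs]
    exact (pow_le_pow_left₀ (abs_nonneg a) ha 2).trans_lt hsqrt
  · rw [← sq_abs]
    exact (pow_le_pow_left₀ (abs_nonneg b) hb 2).trans_lt hsqrt

theorem two_mul_sq_add_three_mul_sq_emod_three_ne_one (x y : ℤ) :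
    (2 * x ^ 2 + 3 * y ^ 2) % 3 ≠ 1 := by
  have hres : ∀ u v : ZMod 3, 2 * u ^ 2 + 3 * v ^ 2 ≠ 1 := by decide
  intro h
  apply hres x y
  exact_mod_cast (ZMod.intCast_eq_intCast_iff' _ 1 3).mpr h

theorem exists_eq_two_mul_sq_add_three_mul_sq_of_mul_eq {k n a b : ℤ}
    (hk : k = 2 ∨ k = 3 ∨ k = 5) (h : k * n = a ^ 2 + 6 * b ^ 2) :
    ∃ x y : ℤ, n = 2 * x ^ 2 + 3 * y ^ 2 := by
  rcases hk with rfl | rfl | rfl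
  · obtain ⟨c, rfl⟩ := Int.prime_two.dvd_of_dvd_pow (a := a) (n := 2) ⟨n - 3 * b ^ 2, by linarith⟩
    exact ⟨c, b, by linarith⟩
  · obtain ⟨c, rfl⟩ :=
      Int.prime_three.dvd_of_dvd_pow (a := a) (n := 2) ⟨n - 2 * b ^ 2, by linarith⟩
    exact ⟨b, c, by linarith⟩
  · -- `6 ≡ -4 [ZMOD 5]`, so the form factors modulo 5
    have h5 : (5 : ℤ) ∣ (a - 2 * b) * (a + 2 * b) := ⟨n - 2 * b ^ 2, by linarith⟩
    rcases (show Prime (5 : ℤ) by norm_num).dvd_or_dvd h5 with ⟨t, ht⟩ | ⟨t, ht⟩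
    · obtain rfl : a = 5 * t + 2 * b := by linarith
      exact ⟨t + b, t, by linarith⟩
    · obtain rfl : a = 5 * t - 2 * b := by linarith
      exact ⟨t - b, t, by linarith⟩

theorem exists_eq_sq_add_six_mul_sq_of_mul_eq {k n a b : ℤ}
    (hk : k = 4 ∨ k = 6) (h : k * n = a ^ 2 + 6 * b ^ 2) :
    ∃ c d : ℤ, n = c ^ 2 + 6 * d ^ 2 := by
  rcases hk with rfl | rfl
  · obtain ⟨c, rfl⟩ :=
      Int.prime_two.dvd_of_dvd_pow (a := a) (n := 2) ⟨2 * n - 3 * b ^ 2, by linarith⟩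
    obtain ⟨d, rfl⟩ :=
      Int.prime_two.dvd_of_dvd_pow (a := b) (n := 2) ⟨n - c ^ 2 - b ^ 2, by linarith⟩
    exact ⟨c, d, by linarith⟩
  · obtain ⟨c, rfl⟩ :=
      Int.prime_three.dvd_of_dvd_pow (a := a) (n := 2) ⟨2 * n - 2 * b ^ 2, by linarith⟩
    obtain ⟨d, rfl⟩ :=
      Int.prime_two.dvd_of_dvd_pow (a := c) (n := 2) ⟨n - b ^ 2 - c ^ 2, by linarith⟩
    exact ⟨b, d, by linarith⟩

theorem exists_eq_sq_add_six_mul_sq_of_dvd {n a b : ℤ} (hn : n % 3 = 1)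
    (hdvd : n ∣ a ^ 2 + 6 * b ^ 2) (hpos : 0 < a ^ 2 + 6 * b ^ 2)
    (hlt : a ^ 2 + 6 * b ^ 2 < 7 * n) : ∃ c d : ℤ, n = c ^ 2 + 6 * d ^ 2 := by
  obtain ⟨k, hk⟩ := hdvd
  have hk' : k * n = a ^ 2 + 6 * b ^ 2 := by rw [hk, mul_comm]
  have hk1 : 1 ≤ k := by nlinarith
  have hk6 : k ≤ 6 := by nlinarith
  obtain rfl | hk | hk : k = 1 ∨ (k = 2 ∨ k = 3 ∨ k = 5) ∨ (k = 4 ∨ k = 6) := by omega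
  · exact ⟨a, b, by linarith⟩
  · obtain ⟨x, y, rfl⟩ := exists_eq_two_mul_sq_add_three_mul_sq_of_mul_eq hk hk'
    exact absurd hn (two_mul_sq_add_three_mul_sq_emod_three_ne_one x y)
  · exact exists_eq_sq_add_six_mul_sq_of_mul_eq hk hk'

theorem stmt_5 (p : ℕ) (hp : p.Prime) :
    (∃ a b : ℤ, (p : ℤ) = a ^ 2 + 6 * b ^ 2) ↔
    (p % 24 = 1 ∨ p % 24 = 7) := by
  refine ⟨fun ⟨a, b, h⟩ => hp.mod_twentyFour_of_eq_sq_add_six_mul_sq h, fun h24 => ?_⟩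
  have : Fact p.Prime := ⟨hp⟩
  obtain ⟨x, hx⟩ := exists_dvd_sq_add_six h24
  obtain ⟨a, b, hab, ha, hb, hdvd⟩ := hp.exists_sq_lt_dvd_sub_mul x
  have hpos : 0 < a ^ 2 + 6 * b ^ 2 := by
    rcases hab with h | h <;> positivity
  have hdvd' : (p : ℤ) ∣ a ^ 2 + 6 * b ^ 2 := by
    rw [show a ^ 2 + 6 * b ^ 2 = (a - x * b) * (a + x * b) + (x ^ 2 + 6) * b ^ 2 by ring]
    exact dvd_add (hdvd.mul_right _) (hx.mul_right _)
  exact exists_eq_sq_add_six_mul_sq_of_dvd (by omega) hdvd' hpos (by linarith)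
end

section
/- A prime p can be written as p = a² + 9b² with integers a, b if and only if p ≡ j² (mod 36) for some j ∈ {1, 5, 7}. -/
/-!
Modulo 12 the form `a ^ 2 + 9 * b ^ 2` only takes the values `0, 1, 4, 6, 9, 10`, and all of them
except `1` are divisible by `2` or `3`; so a prime of this form is `1 mod 12`. Conversely a prime
`p ≡ 1 mod 12` is a sum of two squares by Fermat, and since `p ≡ 1 mod 3` one of the two squares is
divisible by `9`. Finally `p ≡ 1 mod 12` means exactly that `p mod 36` is one of `1, 13, 25`.
-/

theorem exists_mem_sq_mod_thirty_six_iff (n : ℕ) :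
    (∃ j ∈ ({1, 5, 7} : Finset ℕ), n % 36 = j ^ 2 % 36) ↔ n % 12 = 1 := by
  simp only [Finset.mem_insert, Finset.mem_singleton, exists_eq_or_imp, exists_eq_left]
  omega

theorem ZMod.val_sq_add_nine_sq_mem (x y : ZMod 12) :
    (x ^ 2 + 9 * y ^ 2).val ∈ ({0, 1, 4, 6, 9, 10} : Finset ℕ) := by
  revert x y
  decide

theorem ZMod.eq_zero_or_eq_zero_of_sq_add_sq_eq_one (x y : ZMod 3) (h : x ^ 2 + y ^ 2 = 1) :
    x = 0 ∨ y = 0 := by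
  revert x y
  decide

theorem Nat.Prime.mod_twelve_eq_one_of_eq_sq_add_nine_sq {p : ℕ} (hp : p.Prime) {a b : ℤ}
    (h : (p : ℤ) = a ^ 2 + 9 * b ^ 2) : p % 12 = 1 := by
  have hres : p % 12 ∈ ({0, 1, 4, 6, 9, 10} : Finset ℕ) := by
    have hcast : (p : ZMod 12) = (a : ZMod 12) ^ 2 + 9 * (b : ZMod 12) ^ 2 := by
      exact_mod_cast congrArg (Int.cast : ℤ → ZMod 12) h
    rw [← ZMod.val_natCast, hcast]
    exact ZMod.val_sq_add_nine_sq_mem _ _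
  have h2 : 2 ∣ p → 2 = p := (Nat.prime_dvd_prime_iff_eq Nat.prime_two hp).1
  have h3 : 3 ∣ p → 3 = p := (Nat.prime_dvd_prime_iff_eq Nat.prime_three hp).1
  simp only [Finset.mem_insert, Finset.mem_singleton] at hres
  omega

theorem Nat.Prime.exists_sq_add_nine_sq {p : ℕ} (hp : p.Prime) (h : p % 12 = 1) :
    ∃ a b : ℤ, (p : ℤ) = a ^ 2 + 9 * b ^ 2 := by
  have := Fact.mk hp
  obtain ⟨a, b, hab⟩ := Nat.Prime.sq_add_sq (p := p) (by omega)
  have hmod3 : (a : ZMod 3) ^ 2 + (b : ZMod 3) ^ 2 = 1 := by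
    rw [← Nat.cast_pow, ← Nat.cast_pow, ← Nat.cast_add, hab, ← ZMod.natCast_mod,
      show p % 3 = 1 by omega, Nat.cast_one]
  rcases ZMod.eq_zero_or_eq_zero_of_sq_add_sq_eq_one _ _ hmod3 with ha | hb
  · obtain ⟨c, rfl⟩ := (ZMod.natCast_eq_zero_iff a 3).1 ha
    exact ⟨b, c, by rw [← hab]; push_cast; ring⟩
  · obtain ⟨c, rfl⟩ := (ZMod.natCast_eq_zero_iff b 3).1 hb
    exact ⟨a, c, by rw [← hab]; push_cast; ring⟩

theorem stmt_6 (p : ℕ) (hp : p.Prime) :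
    (∃ a b : ℤ, (p : ℤ) = a ^ 2 + 9 * b ^ 2) ↔
    (∃ j ∈ ({1, 5, 7} : Finset ℕ), p % 36 = j ^ 2 % 36) := by
  rw [exists_mem_sq_mod_thirty_six_iff]
  exact ⟨fun ⟨_, _, h⟩ => hp.mod_twelve_eq_one_of_eq_sq_add_nine_sq h, hp.exists_sq_add_nine_sq⟩
end

section
/- A prime p can be written as p = 5b² − a² with integers a, b if and only if p = 5 or p ≡ ±j² (mod 20) for some j ∈ {1, 3}, i.e. p ≡ 1, 9, 11, or 19 (mod 20). -/
lemma thue_aux (p : ℕ) [Fact p.Prime] (r : ZMod p) :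
    ∃ a b : ℤ, ((a : ZMod p) = r * (b : ZMod p)) ∧ a.natAbs ≤ Nat.sqrt p ∧
      b.natAbs ≤ Nat.sqrt p ∧ ¬(a = 0 ∧ b = 0) := by
  set n := Nat.sqrt p with hn
  have hcard : Fintype.card (ZMod p) <
      ((Finset.range (n+1)) ×ˢ (Finset.range (n+1))).card := by
    rw [Finset.card_product, Finset.card_range, ZMod.card]
    have := Nat.lt_succ_sqrt' p
    nlinarith [this]
  obtain ⟨⟨x₁, y₁⟩, h1, ⟨x₂, y₂⟩, h2, hne, heq⟩ :=
    Finset.exists_ne_map_eq_of_card_lt_of_maps_to (t := (Finset.univ : Finset (ZMod p)))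
      (by rw [Finset.card_univ]; exact hcard)
      (f := fun x : ℕ × ℕ => ((x.1 : ℕ) : ZMod p) - r * ((x.2 : ℕ) : ZMod p))
      (fun x _ => Finset.mem_univ _)
  obtain ⟨hx1, hy1⟩ := Finset.mem_product.mp h1
  obtain ⟨hx2, hy2⟩ := Finset.mem_product.mp h2
  rw [Finset.mem_range] at hx1 hy1 hx2 hy2
  refine ⟨(x₁ : ℤ) - x₂, (y₁ : ℤ) - y₂, ?_, by omega, by omega, ?_⟩
  · push_cast
    linear_combination heq
  · rintro ⟨ha, hb⟩
    apply hne
    have : x₁ = x₂ := by omega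
    have : y₁ = y₂ := by omega
    simp_all

lemma five_sq (a b : ℤ) (h : a ^ 2 = 5 * b ^ 2) : a = 0 ∧ b = 0 := by
  have hb : b = 0 := by
    by_contra hb
    have ha : a ≠ 0 := by
      intro h0
      rw [h0] at h
      have : b ^ 2 = 0 := by linarith [sq_nonneg b]
      exact hb (pow_eq_zero_iff (by norm_num) |>.mp this)
    have hN : a.natAbs ^ 2 = 5 * b.natAbs ^ 2 := by
      have := congrArg Int.natAbs h
      simpa [Int.natAbs_mul, Int.natAbs_pow] using this
    have hbn : b.natAbs ≠ 0 := Int.natAbs_ne_zero.mpr hb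
    have han : a.natAbs ≠ 0 := Int.natAbs_ne_zero.mpr ha
    have h5 : Nat.Prime 5 := by norm_num
    have e1 : (a.natAbs ^ 2).factorization 5 = 2 * a.natAbs.factorization 5 := by
      rw [Nat.factorization_pow]; simp [mul_comm]
    have e2 : (5 * b.natAbs ^ 2).factorization 5
        = 1 + 2 * b.natAbs.factorization 5 := by
      rw [Nat.factorization_mul (by norm_num) (pow_ne_zero _ hbn),
        Nat.factorization_pow]
      simp [h5.factorization_self, mul_comm]
    rw [hN, e2] at e1
    omega
  refine ⟨?_, hb⟩
  rw [hb] at h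
  have : a ^ 2 = 0 := by linarith
  exact pow_eq_zero_iff (by norm_num) |>.mp this

/-- from x² - 5y² = p produce a representation p = 5b² - a² -/
lemma step_unit (p x y : ℤ) (h : x ^ 2 - 5 * y ^ 2 = p) :
    ∃ a b : ℤ, p = 5 * b ^ 2 - a ^ 2 :=
  ⟨2 * x + 5 * y, x + 2 * y, by linear_combination -h⟩

/-- halving in the case 5b² - a² = 4p -/
lemma four_case (p a b : ℤ) (h : 5 * b ^ 2 - a ^ 2 = 4 * p) :
    ∃ x y : ℤ, p = 5 * y ^ 2 - x ^ 2 := by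
  obtain ⟨k, hk⟩ | ⟨k, hk⟩ := Int.even_or_odd a <;>
    obtain ⟨l, hl⟩ | ⟨l, hl⟩ := Int.even_or_odd b <;> subst hk hl
  · -- both even : divide by 2
    exact ⟨k, l, by linarith⟩
  · -- a even, b odd : impossible
    exfalso
    obtain ⟨t, ht⟩ : ∃ t : ℤ, t = 5 * l ^ 2 + 5 * l - k ^ 2 := ⟨_, rfl⟩
    have e : 4 * t + 5 = 4 * p := by rw [ht]; linear_combination h
    omega
  · -- a odd, b even : impossible
    exfalso
    obtain ⟨t, ht⟩ : ∃ t : ℤ, t = 5 * l ^ 2 - k ^ 2 - k := ⟨_, rfl⟩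
    have e : 4 * t - 1 = 4 * p := by rw [ht]; linear_combination h
    omega
  · -- both odd
    obtain ⟨m, hm⟩ | ⟨m, hm⟩ := Int.even_or_odd (k + l)
    · have hk' : k = 2 * m - l := by omega
      subst hk'
      have e : 4 * ((m - 3 * l - 1) ^ 2 - 5 * (m - l) ^ 2) = 4 * p := by
        linear_combination h
      have hx : (m - 3 * l - 1) ^ 2 - 5 * (m - l) ^ 2 = p := by linarith
      exact step_unit p _ _ hx
    · have hk' : k = 2 * m + 1 - l := by omega
      subst hk'
      have e : 4 * ((m + 2 * l + 2) ^ 2 - 5 * (m + 1) ^ 2) = 4 * p := by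
        linear_combination h
      have hx : (m + 2 * l + 2) ^ 2 - 5 * (m + 1) ^ 2 = p := by linarith
      exact step_unit p _ _ hx

lemma key20 : ∀ A B : ZMod 20,
    ¬((2 : ZMod 20) = 5 * B ^ 2 - A ^ 2) ∧
    ¬((3 : ZMod 20) = 5 * B ^ 2 - A ^ 2) ∧
    ¬((7 : ZMod 20) = 5 * B ^ 2 - A ^ 2) ∧
    ¬((13 : ZMod 20) = 5 * B ^ 2 - A ^ 2) ∧
    ¬((17 : ZMod 20) = 5 * B ^ 2 - A ^ 2) := by decide

lemma key8 : ∀ A B Q : ZMod 8, 5 * B ^ 2 - A ^ 2 ≠ 2 * (2 * Q + 1) := by decide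

lemma key5' : ∀ A B C : ZMod 5, C = 1 ∨ C = 4 → 5 * B ^ 2 - A ^ 2 ≠ C * 3 := by decide

lemma sq15 : IsSquare (1 : ZMod 5) ∧ IsSquare (4 : ZMod 5) := by
  exact ⟨⟨1, by decide⟩, ⟨2, by decide⟩⟩

theorem stmt_7 (p : ℕ) (hp : p.Prime) :
    (∃ a b : ℤ, (p : ℤ) = 5 * b ^ 2 - a ^ 2) ↔
    (p = 5 ∨ p % 20 = 1 ∨ p % 20 = 9 ∨ p % 20 = 11 ∨ p % 20 = 19) := by
  constructor
  · rintro ⟨a, b, h⟩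
    -- reduce mod 20
    have h20 : ((p : ℕ) : ZMod 20) = 5 * (b : ZMod 20) ^ 2 - (a : ZMod 20) ^ 2 := by
      have := congrArg (fun z : ℤ => (z : ZMod 20)) h
      push_cast at this
      exact this
    by_cases h5 : p = 5
    · exact Or.inl h5
    by_cases h2 : p = 2
    · exfalso
      subst h2
      have h20' : (2 : ZMod 20) = 5 * (b : ZMod 20) ^ 2 - (a : ZMod 20) ^ 2 := by
        exact_mod_cast h20
      exact (key20 _ _).1 h20'
    have hp2 : p % 2 = 1 := by
      rcases Nat.Prime.eq_two_or_odd hp with h | h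
      · exact absurd h h2
      · exact h
    have hp5 : p % 5 ≠ 0 := by
      intro h0
      have : (5 : ℕ) ∣ p := Nat.dvd_of_mod_eq_zero h0
      rcases (Nat.Prime.eq_one_or_self_of_dvd hp 5 this) with h | h
      · norm_num at h
      · exact h5 h.symm
    have hmod : p % 20 = 1 ∨ p % 20 = 3 ∨ p % 20 = 7 ∨ p % 20 = 9 ∨
        p % 20 = 11 ∨ p % 20 = 13 ∨ p % 20 = 17 ∨ p % 20 = 19 := by omega
    have hcast : ((p % 20 : ℕ) : ZMod 20) = ((p : ℕ) : ZMod 20) := ZMod.natCast_mod p 20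
    rcases hmod with h | h | h | h | h | h | h | h
    · exact Or.inr (Or.inl h)
    · exfalso; rw [← hcast, h] at h20
      have h20' : (3 : ZMod 20) = 5 * ((b : ℤ) : ZMod 20) ^ 2 - ((a : ℤ) : ZMod 20) ^ 2 := by
        exact_mod_cast h20
      exact (key20 _ _).2.1 h20'
    · exfalso; rw [← hcast, h] at h20
      have h20' : (7 : ZMod 20) = 5 * ((b : ℤ) : ZMod 20) ^ 2 - ((a : ℤ) : ZMod 20) ^ 2 := by
        exact_mod_cast h20
      exact (key20 _ _).2.2.1 h20'
    · exact Or.inr (Or.inr (Or.inl h))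
    · exact Or.inr (Or.inr (Or.inr (Or.inl h)))
    · exfalso; rw [← hcast, h] at h20
      have h20' : (13 : ZMod 20) = 5 * ((b : ℤ) : ZMod 20) ^ 2 - ((a : ℤ) : ZMod 20) ^ 2 := by
        exact_mod_cast h20
      exact (key20 _ _).2.2.2.1 h20'
    · exfalso; rw [← hcast, h] at h20
      have h20' : (17 : ZMod 20) = 5 * ((b : ℤ) : ZMod 20) ^ 2 - ((a : ℤ) : ZMod 20) ^ 2 := by
        exact_mod_cast h20
      exact (key20 _ _).2.2.2.2 h20'
    · exact Or.inr (Or.inr (Or.inr (Or.inr h)))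
  · intro hmod
    by_cases h5 : p = 5
    · exact ⟨0, 1, by rw [h5]; norm_num⟩
    have hm : p % 20 = 1 ∨ p % 20 = 9 ∨ p % 20 = 11 ∨ p % 20 = 19 := by tauto
    have hp2 : p ≠ 2 := by intro h; rw [h] at hm; omega
    haveI : Fact p.Prime := ⟨hp⟩
    haveI : Fact (Nat.Prime 5) := ⟨by norm_num⟩
    have hp5mod : p % 5 = 1 ∨ p % 5 = 4 := by omega
    -- 5 is a square mod p
    have hsq : IsSquare ((5 : ℕ) : ZMod p) := by
      rw [← ZMod.exists_sq_eq_prime_iff_of_mod_four_eq_one (by norm_num : 5 % 4 = 1) hp2]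
      rw [← ZMod.natCast_mod p 5]
      rcases hp5mod with h | h <;> rw [h]
      · exact_mod_cast sq15.1
      · exact_mod_cast sq15.2
    obtain ⟨r, hr⟩ := hsq
    obtain ⟨a, b, hab, hba, hbb, hnz⟩ := thue_aux p r
    -- p divides 5b² - a²
    have hdvd : ((p : ℕ) : ℤ) ∣ 5 * b ^ 2 - a ^ 2 := by
      have hr' : (5 : ZMod p) = r * r := by exact_mod_cast hr
      rw [← ZMod.intCast_zmod_eq_zero_iff_dvd]
      push_cast
      rw [hab]
      linear_combination ((b : ZMod p)) ^ 2 * hr'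
    obtain ⟨m, hmeq⟩ := hdvd
    have hpn : 1 < p := hp.one_lt
    -- strict bounds a² < p, b² < p
    have hsqlt : ∀ c : ℤ, c.natAbs ≤ Nat.sqrt p → c ^ 2 < (p : ℤ) := by
      intro c hc
      have h1 : c.natAbs ^ 2 ≤ p := by
        calc c.natAbs ^ 2 ≤ Nat.sqrt p ^ 2 := Nat.pow_le_pow_left hc 2
        _ ≤ p := by have := Nat.sqrt_le' p; nlinarith
      have h2 : c.natAbs ^ 2 ≠ p := by
        intro he
        rcases (Nat.Prime.eq_one_or_self_of_dvd hp c.natAbs ⟨c.natAbs, by nlinarith⟩) with h | h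
        · rw [h] at he; omega
        · rw [h] at he; nlinarith
      have h3 : c.natAbs ^ 2 < p := lt_of_le_of_ne h1 h2
      calc c ^ 2 = ((c.natAbs : ℤ)) ^ 2 := by rw [Int.natAbs_sq]  -- may need fix
      _ < (p : ℤ) := by exact_mod_cast h3
    have ha2 : a ^ 2 < (p : ℤ) := hsqlt a hba
    have hb2 : b ^ 2 < (p : ℤ) := hsqlt b hbb
    have hppos : (0 : ℤ) < (p : ℤ) := by exact_mod_cast hp.pos
    -- m ∈ {0,1,2,3,4}
    have hm0 : 0 ≤ m := by nlinarith [sq_nonneg a, sq_nonneg b]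
    have hm4 : m ≤ 4 := by nlinarith [sq_nonneg a, sq_nonneg b]
    -- m ≠ 0
    have hmne0 : m ≠ 0 := by
      intro h0
      rw [h0, mul_zero] at hmeq
      have := five_sq a b (by linarith)
      exact hnz ⟨this.1, this.2⟩
    have hp2' : p % 2 = 1 := by omega
    interval_cases m
    · omega
    · exact ⟨a, b, by linarith⟩
    · -- m = 2 impossible mod 8
      exfalso
      obtain ⟨q, hq⟩ : ∃ q : ℕ, p = 2 * q + 1 := ⟨p / 2, by omega⟩
      have h8 : 5 * (b : ZMod 8) ^ 2 - (a : ZMod 8) ^ 2 = 2 * (2 * (q : ZMod 8) + 1) := by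
        have := congrArg (fun z : ℤ => (z : ZMod 8)) hmeq
        push_cast at this
        rw [this, hq]
        push_cast
        ring
      exact key8 _ _ _ h8
    · -- m = 3 impossible mod 5
      exfalso
      have h5c : 5 * (b : ZMod 5) ^ 2 - (a : ZMod 5) ^ 2
          = ((p % 5 : ℕ) : ZMod 5) * 3 := by
        have := congrArg (fun z : ℤ => (z : ZMod 5)) hmeq
        push_cast at this
        rw [this, ZMod.natCast_mod]
      refine key5' _ _ _ ?_ h5c
      rcases hp5mod with h | h <;> rw [h]
      · left; norm_cast
      · right; norm_cast
    · -- m = 4 : halving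
      obtain ⟨x, y, hxy⟩ := four_case (p : ℤ) a b (by linarith)
      exact ⟨x, y, hxy⟩
end

section
/- A prime p satisfies: p is expressible as p = 2b² − a² (with integers a, b) if and only if p is expressible as p = a² − 2b² (with integers a, b); both hold precisely when p = 2 or p ≡ ±1 (mod 8). -/
/-!
Since `(1 + √2)` has norm `-1`, the forms `2b² - a²` and `a² - 2b²` represent the same integers.
Necessity is a computation modulo 8. For sufficiency, `2 ≡ c²` modulo `p` by the second
supplement to quadratic reciprocity, and Thue's lemma gives `x ≡ c y (mod p)` with `x², y² < p`,
not both zero. Then `x² - 2y²` is a multiple of `p` strictly between `-2p` and `p`, and it is not `0`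
because `√2` is irrational, so it equals `-p`.
-/

theorem exists_two_mul_sq_sub_sq_iff {R : Type*} [CommRing R] (q : R) :
    (∃ a b : R, q = 2 * b ^ 2 - a ^ 2) ↔ ∃ a b : R, q = a ^ 2 - 2 * b ^ 2 := by
  constructor <;>
  · rintro ⟨a, b, h⟩
    exact ⟨a + 2 * b, a + b, by linear_combination h⟩

theorem mod_eight_of_eq_two_mul_sq_sub_sq {n : ℕ} {a b : ℤ} (hn : Odd n)
    (h : (n : ℤ) = 2 * b ^ 2 - a ^ 2) : n % 8 = 1 ∨ n % 8 = 7 := by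
  have h8 : ((n % 8 : ℕ) : ZMod 8) = 2 * (b : ZMod 8) ^ 2 - (a : ZMod 8) ^ 2 := by
    rw [ZMod.natCast_mod]
    exact_mod_cast congrArg (Int.cast : ℤ → ZMod 8) h
  have hodd : n % 8 = 1 ∨ n % 8 = 3 ∨ n % 8 = 5 ∨ n % 8 = 7 := by
    rcases hn with ⟨k, rfl⟩; omega
  generalize (a : ZMod 8) = x, (b : ZMod 8) = y at h8
  rcases hodd with h | h | h | h <;> simp only [h, Nat.cast_ofNat] at h8 ⊢ <;> revert x y <;> decide

theorem ZMod.thues_lemma {n : ℕ} [NeZero n] (c : ZMod n) :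
    ∃ x y : ℤ, (x, y) ≠ 0 ∧ x ^ 2 ≤ n ∧ y ^ 2 ≤ n ∧ (x : ZMod n) = c * y := by
  set k := n.sqrt
  have hcard : Fintype.card (ZMod n) < Fintype.card (Fin (k + 1) × Fin (k + 1)) := by
    simpa [ZMod.card] using Nat.lt_succ_sqrt n
  obtain ⟨⟨u, v⟩, ⟨u', v'⟩, hne, heq⟩ := Fintype.exists_ne_map_eq_of_card_lt
    (fun uv : Fin (k + 1) × Fin (k + 1) => (uv.1 : ZMod n) - c * uv.2) hcard
  have hk : (k : ℤ) ^ 2 ≤ n := mod_cast Nat.sqrt_le' n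
  have hu := u.is_lt; have hu' := u'.is_lt; have hv := v.is_lt; have hv' := v'.is_lt
  refine ⟨(u : ℤ) - u', (v : ℤ) - v', ?_, ?_, ?_, ?_⟩
  · intro h
    simp only [Prod.mk_eq_zero, sub_eq_zero, Nat.cast_inj] at h
    exact hne (Prod.ext (Fin.ext h.1) (Fin.ext h.2))
  · exact (sq_le_sq' (by omega) (by omega)).trans hk
  · exact (sq_le_sq' (by omega) (by omega)).trans hk
  · push_cast
    linear_combination heq

theorem Int.eq_zero_of_sq_eq_two_mul_sq {x y : ℤ} (h : x ^ 2 = 2 * y ^ 2) : y = 0 := by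
  by_contra hy
  have : IsSquare (2 : ℚ) := ⟨x / y, by field_simp; exact_mod_cast h.symm⟩
  exact Nat.prime_two.prime.not_isSquare (Rat.isSquare_ofNat_iff.mp this)

theorem Nat.Prime.exists_eq_two_mul_sq_sub_sq {p : ℕ} (hp : p.Prime) (h2 : IsSquare (2 : ZMod p)) :
    ∃ a b : ℤ, (p : ℤ) = 2 * b ^ 2 - a ^ 2 := by
  have : Fact p.Prime := ⟨hp⟩
  obtain ⟨c, hc⟩ := h2
  obtain ⟨x, y, hxy, hx, hy, hcong⟩ := ZMod.thues_lemma c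
  have hsq : ∀ z : ℤ, z ^ 2 ≠ p := fun z hz =>
    (Nat.prime_iff_prime_int.mp hp).not_isSquare ⟨z, by rw [← hz, sq]⟩
  have hx' : x ^ 2 < p := lt_of_le_of_ne hx (hsq x)
  have hy' : y ^ 2 < p := lt_of_le_of_ne hy (hsq y)
  obtain ⟨m, hm⟩ : (p : ℤ) ∣ x ^ 2 - 2 * y ^ 2 := by
    rw [← ZMod.intCast_zmod_eq_zero_iff_dvd]
    push_cast
    rw [hcong, hc]
    ring
  have hm' : m = -1 ∨ m = 0 := by
    have hp0 : (0 : ℤ) < p := mod_cast hp.pos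
    have : m < 1 := by nlinarith
    have : -2 < m := by nlinarith
    omega
  rcases hm' with rfl | rfl
  · exact ⟨x, y, by linear_combination hm⟩
  · have hy0 : y = 0 := Int.eq_zero_of_sq_eq_two_mul_sq (x := x) (by linear_combination hm)
    have hx0 : x = 0 := by simpa [hy0] using hm
    exact absurd (by simp [hx0, hy0]) hxy

theorem stmt_9 (p : ℕ) (hp : p.Prime) :
    ((∃ a b : ℤ, (p : ℤ) = 2 * b ^ 2 - a ^ 2) ↔
      (∃ a b : ℤ, (p : ℤ) = a ^ 2 - 2 * b ^ 2)) ∧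
    ((∃ a b : ℤ, (p : ℤ) = 2 * b ^ 2 - a ^ 2) ↔
      (p = 2 ∨ p % 8 = 1 ∨ p % 8 = 7)) := by
  refine ⟨exists_two_mul_sq_sub_sq_iff _, ?_, fun h => hp.exists_eq_two_mul_sq_sub_sq ?_⟩
  · rintro ⟨a, b, h⟩
    rcases hp.eq_two_or_odd' with rfl | hodd
    · exact Or.inl rfl
    · exact Or.inr (mod_eight_of_eq_two_mul_sq_sub_sq hodd h)
  · rcases h with rfl | h8
    · exact ⟨0, by decide⟩
    · have : Fact p.Prime := ⟨hp⟩
      exact (ZMod.exists_sq_eq_two_iff (by omega)).mpr h8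
end

section
/- A prime p can be written as p = a² − 3b² with integers a, b if and only if p ≡ 1 (mod 12). -/
lemma aux_zmod3 : ∀ A B : ZMod 3, 3 * B ^ 2 - A ^ 2 ≠ 1 := by decide

/-- `a ^ 2 = 3 * b ^ 2` forces `b = 0` (3-adic valuation). -/
lemma aux_sqrt3 (a b : ℤ) (h : a ^ 2 = 3 * b ^ 2) : b = 0 := by
  by_contra hb
  have hA : a.natAbs ^ 2 = 3 * b.natAbs ^ 2 := by
    have := congrArg Int.natAbs h
    simpa [Int.natAbs_mul, Int.natAbs_pow] using this
  have hb' : b.natAbs ≠ 0 := by simpa using hb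
  have h3 : (3 : ℕ).Prime := by norm_num
  have e1 : (a.natAbs ^ 2).factorization 3 = 2 * a.natAbs.factorization 3 := by
    simp [Nat.factorization_pow]
  have e2 : (3 * b.natAbs ^ 2).factorization 3 = 1 + 2 * b.natAbs.factorization 3 := by
    rw [Nat.factorization_mul (by norm_num) (pow_ne_zero 2 hb'), Nat.factorization_pow]
    simp [Nat.Prime.factorization h3, Finsupp.single_apply]
  rw [hA, e2] at e1
  omega

theorem stmt_10 (p : ℕ) (hp : p.Prime) :
    (∃ a b : ℤ, (p : ℤ) = a ^ 2 - 3 * b ^ 2) ↔ p % 12 = 1 := by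
  constructor
  · rintro ⟨a, b, hab⟩
    have h12 : (p : ZMod 12) = (a : ZMod 12) ^ 2 - 3 * (b : ZMod 12) ^ 2 := by
      have := congrArg (fun z : ℤ => (z : ZMod 12)) hab
      push_cast at this
      exact this
    have key : ∀ x y : ZMod 12, x ^ 2 - 3 * y ^ 2 ≠ 2 ∧ x ^ 2 - 3 * y ^ 2 ≠ 3 ∧
        x ^ 2 - 3 * y ^ 2 ≠ 5 ∧ x ^ 2 - 3 * y ^ 2 ≠ 7 ∧ x ^ 2 - 3 * y ^ 2 ≠ 11 := by decide
    obtain ⟨k2, k3, k5, k7, k11⟩ := key (a : ZMod 12) (b : ZMod 12)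
    have hv : ((p % 12 : ℕ) : ZMod 12) = (p : ZMod 12) := ZMod.natCast_mod p 12
    have hput : ∀ r : ℕ, p % 12 = r → (a : ZMod 12) ^ 2 - 3 * (b : ZMod 12) ^ 2
        = ((r : ℕ) : ZMod 12) := by
      intro r hr; rw [← h12, ← hv, hr]
    have h2d : ¬ (2 ∣ p ∧ p % 12 ≠ 2) := by
      rintro ⟨hd, hne⟩
      have := (hp.eq_one_or_self_of_dvd 2 hd).resolve_left (by norm_num)
      omega
    have h3d : ¬ (3 ∣ p ∧ p % 12 ≠ 3) := by
      rintro ⟨hd, hne⟩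
      have := (hp.eq_one_or_self_of_dvd 3 hd).resolve_left (by norm_num)
      omega
    have hcases : p % 12 = 0 ∨ p % 12 = 1 ∨ p % 12 = 2 ∨ p % 12 = 3 ∨ p % 12 = 4 ∨
        p % 12 = 5 ∨ p % 12 = 6 ∨ p % 12 = 7 ∨ p % 12 = 8 ∨ p % 12 = 9 ∨ p % 12 = 10 ∨
        p % 12 = 11 := by omega
    rcases hcases with h|h|h|h|h|h|h|h|h|h|h|h
    · exact absurd ⟨by omega, by omega⟩ h2d
    · exact h
    · exact absurd (by have := hput 2 h; push_cast at this; exact this) k2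
    · exact absurd (by have := hput 3 h; push_cast at this; exact this) k3
    · exact absurd ⟨by omega, by omega⟩ h2d
    · exact absurd (by have := hput 5 h; push_cast at this; exact this) k5
    · exact absurd ⟨by omega, by omega⟩ h2d
    · exact absurd (by have := hput 7 h; push_cast at this; exact this) k7
    · exact absurd ⟨by omega, by omega⟩ h2d
    · exact absurd ⟨by omega, by omega⟩ h3d
    · exact absurd ⟨by omega, by omega⟩ h2d
    · exact absurd (by have := hput 11 h; push_cast at this; exact this) k11
  · intro hmod
    haveI : Fact p.Prime := ⟨hp⟩
    haveI : Fact (Nat.Prime 3) := ⟨by norm_num⟩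
    -- 3 is a square mod p
    have hsq : IsSquare ((3 : ℕ) : ZMod p) := by
      rw [ZMod.exists_sq_eq_prime_iff_of_mod_four_eq_one (by omega) (by norm_num)]
      refine ⟨1, ?_⟩
      have h1 : ((p % 3 : ℕ) : ZMod 3) = (p : ZMod 3) := ZMod.natCast_mod p 3
      have h2 : p % 3 = 1 := by omega
      rw [← h1, h2]
      norm_num
    obtain ⟨x, hx⟩ := hsq
    have hx3 : (3 : ZMod p) = x * x := by push_cast at hx; exact hx
    -- Thue's lemma via pigeonhole
    set n := Nat.sqrt p with hn
    have hnsq : ∀ m : ℕ, m ≤ n → m ^ 2 < p := by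
      intro m hm
      have h1 : m ^ 2 ≤ n ^ 2 := Nat.pow_le_pow_left hm 2
      have h2 : n ^ 2 ≤ p := by nlinarith [Nat.sqrt_le' p]
      have hns : n ^ 2 ≠ p := by
        intro h
        have hd : n ∣ p := Dvd.intro n (by rw [← h]; ring)
        rcases hp.eq_one_or_self_of_dvd n hd with h' | h'
        · rw [h'] at h; norm_num at h; have := hp.two_le; omega
        · rw [h'] at h; have := hp.two_le; nlinarith
      omega
    have hcard : Fintype.card (ZMod p) < Fintype.card (Fin (n + 1) × Fin (n + 1)) := by
      rw [ZMod.card]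
      simp only [Fintype.card_prod, Fintype.card_fin]
      have := Nat.lt_succ_sqrt p
      nlinarith
    obtain ⟨u, v, huv, hfeq⟩ := Fintype.exists_ne_map_eq_of_card_lt
      (fun q : Fin (n + 1) × Fin (n + 1) => ((q.1 : ℕ) : ZMod p) - x * ((q.2 : ℕ) : ZMod p)) hcard
    set a : ℤ := (u.1 : ℤ) - (v.1 : ℤ) with ha
    set b : ℤ := (u.2 : ℤ) - (v.2 : ℤ) with hb
    have hab : ((a : ℤ) : ZMod p) = x * ((b : ℤ) : ZMod p) := by
      have h0 : ((u.1 : ℕ) : ZMod p) - x * ((u.2 : ℕ) : ZMod p)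
          = ((v.1 : ℕ) : ZMod p) - x * ((v.2 : ℕ) : ZMod p) := hfeq
      rw [ha, hb]
      push_cast
      linear_combination h0
    have habs : ∀ c : ℤ, ∀ i j : Fin (n + 1), c = (i : ℤ) - (j : ℤ) → c ^ 2 < p := by
      intro c i j hc
      have hi := i.isLt
      have hj := j.isLt
      have h1 : c.natAbs ≤ n := by omega
      have h2 := hnsq c.natAbs h1
      have h3 : c ^ 2 = ((c.natAbs : ℤ)) ^ 2 := by
        rw [← sq_abs, Int.abs_eq_natAbs]
      rw [h3]
      exact_mod_cast h2
    have hasq : a ^ 2 < (p : ℤ) := habs a u.1 v.1 ha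
    have hbsq : b ^ 2 < (p : ℤ) := habs b u.2 v.2 hb
    have hsmall : ∀ c : ℤ, c ^ 2 < (p : ℤ) → (p : ℤ) ∣ c → c = 0 := by
      intro c hc hd
      by_contra hne
      have h1 : (p : ℤ) ≤ |c| := Int.le_of_dvd (abs_pos.mpr hne) ((dvd_abs _ _).mpr hd)
      have h2 : (1 : ℤ) ≤ |c| := by
        have := hp.two_le; omega
      nlinarith [sq_abs c]
    have hbne : b ≠ 0 := by
      intro h0
      apply huv
      have ha0 : a = 0 := by
        apply hsmall a hasq
        rw [← ZMod.intCast_zmod_eq_zero_iff_dvd]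
        rw [hab, h0]
        simp
      have h1 : u.1 = v.1 := by
        have := ha0; rw [ha] at this; ext1
        have := u.1.isLt; have := v.1.isLt; omega
      have h2 : u.2 = v.2 := by
        have := h0; rw [hb] at this; ext1
        have := u.2.isLt; have := v.2.isLt; omega
      exact Prod.ext h1 h2
    -- p divides a^2 - 3b^2
    have hdvd : (p : ℤ) ∣ a ^ 2 - 3 * b ^ 2 := by
      rw [← ZMod.intCast_zmod_eq_zero_iff_dvd]
      push_cast
      rw [hab, hx3]
      ring
    obtain ⟨k, hk⟩ := hdvd
    have hppos : (0 : ℤ) < (p : ℤ) := by exact_mod_cast hp.pos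
    have hkrange : k = -2 ∨ k = -1 ∨ k = 0 := by
      have hub : (p : ℤ) * k < (p : ℤ) * 1 := by
        rw [← hk]; nlinarith [sq_nonneg b]
      have hlb : (p : ℤ) * (-3) < (p : ℤ) * k := by
        rw [← hk]; nlinarith [sq_nonneg a]
      have h1 := lt_of_mul_lt_mul_left hub (le_of_lt hppos)
      have h2 := lt_of_mul_lt_mul_left hlb (le_of_lt hppos)
      omega
    rcases hkrange with rfl | rfl | rfl
    · -- a^2 - 3b^2 = -2p
      have h2p : 3 * b ^ 2 - a ^ 2 = 2 * (p : ℤ) := by linarith [hk]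
      rcases Int.even_or_odd a with ⟨m, hm⟩ | ⟨m, hm⟩ <;>
          rcases Int.even_or_odd b with ⟨nn, hnn⟩ | ⟨nn, hnn⟩
      · -- even, even : p is even, contradiction
        exfalso
        rw [hm, hnn] at h2p
        ring_nf at h2p
        have hd2 : (2 : ℤ) ∣ (p : ℤ) := ⟨3 * nn ^ 2 - m ^ 2, by linarith⟩
        have : (2 : ℕ) ∣ p := by exact_mod_cast hd2
        omega
      · -- even, odd : parity contradiction
        exfalso
        rw [hm, hnn] at h2p
        ring_nf at h2p
        have hd2 : (2 : ℤ) ∣ 3 := ⟨(p : ℤ) + 2 * m ^ 2 - 6 * nn ^ 2 - 6 * nn, by linarith⟩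
        norm_num at hd2
      · -- odd, even : parity contradiction
        exfalso
        rw [hm, hnn] at h2p
        ring_nf at h2p
        have hd2 : (2 : ℤ) ∣ 1 := ⟨6 * nn ^ 2 - 2 * m - 2 * m ^ 2 - (p : ℤ), by linarith⟩
        norm_num at hd2
      · -- odd, odd : construct solution
        refine ⟨m + 3 * nn + 2, m + nn + 1, ?_⟩
        have h2 : 2 * (p : ℤ) = 2 * ((m + 3 * nn + 2) ^ 2 - 3 * (m + nn + 1) ^ 2) := by
          rw [hm, hnn] at h2p
          linear_combination -h2p
        have := mul_left_cancel₀ (by norm_num : (2 : ℤ) ≠ 0) h2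
        linarith
    · -- a^2 - 3b^2 = -p : impossible mod 3
      exfalso
      have hpe : (p : ℤ) = 3 * b ^ 2 - a ^ 2 := by linarith [hk]
      have h1 : ((p : ℕ) : ZMod 3) = 3 * (b : ZMod 3) ^ 2 - (a : ZMod 3) ^ 2 := by
        have := congrArg (fun z : ℤ => (z : ZMod 3)) hpe
        push_cast at this
        exact this
      have h2 : ((p : ℕ) : ZMod 3) = 1 := by
        have hm3 : p % 3 = 1 := by omega
        have hcast : ((p % 3 : ℕ) : ZMod 3) = (p : ZMod 3) := ZMod.natCast_mod p 3
        rw [← hcast, hm3]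
        norm_num
      rw [h2] at h1
      exact aux_zmod3 _ _ h1.symm
    · -- a^2 = 3b^2 : impossible since b ≠ 0
      exact absurd (aux_sqrt3 a b (by linarith [hk])) hbne
end

section
/- A prime p can be written as p = a² − 11b² with integers a, b if and only if p ≡ j² (mod 44) for some j ∈ {1, 3, 5, 7, 9}. -/
/-! If `p = a² - 11b²`, then `p ≡ a² (mod 11)` and `p ≢ 3 (mod 4)`, which for a prime leaves
exactly the classes `j² mod 44`. Conversely, for such `p` quadratic reciprocity makes `11` a
square mod `p`, say `r² = 11`. Thue's lemma in a box of sides `√(3p)` and `√(p/3)` gives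
`x ≡ r y (mod p)` with `x² - 11y² = kp` and `0 < |k| ≤ 3`. Congruences mod 3, 4 and 8 exclude
every `k` except `1` and `-2`, and for `k = -2` multiplying `x + y√11` by `3 + √11` (of norm `-2`)
and halving gives a representation of `p`. -/

theorem ZMod.exists_ne_zero_abs_le_intCast_eq_mul {n : ℕ} [NeZero n] {A B : ℕ}
    (h : n < (A + 1) * (B + 1)) (r : ZMod n) :
    ∃ x y : ℤ, (x, y) ≠ 0 ∧ |x| ≤ A ∧ |y| ≤ B ∧ (x : ZMod n) = r * y := by
  have hcard : Fintype.card (ZMod n) < Fintype.card (Fin (A + 1) × Fin (B + 1)) := by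
    simpa using h
  obtain ⟨⟨i, j⟩, ⟨i', j'⟩, hne, heq⟩ := Fintype.exists_ne_map_eq_of_card_lt
    (fun ij : Fin (A + 1) × Fin (B + 1) => ((ij.1 : ℕ) : ZMod n) - r * (ij.2 : ℕ)) hcard
  refine ⟨(i : ℤ) - i', (j : ℤ) - j', ?_, ?_, ?_, ?_⟩
  · intro h0
    simp only [Prod.mk_eq_zero, sub_eq_zero, Nat.cast_inj, Fin.val_inj] at h0
    exact hne (Prod.ext h0.1 h0.2)
  · have := i.isLt; have := i'.isLt
    rw [abs_le]; constructor <;> omega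
  · have := j.isLt; have := j'.isLt
    rw [abs_le]; constructor <;> omega
  · push_cast
    linear_combination heq

instance : Zsqrtd.Nonsquare 11 :=
  ⟨fun n h => by
    rcases Nat.lt_or_ge n 4 with hn | hn
    · interval_cases n <;> omega
    · nlinarith⟩

theorem sq_sub_eleven_mul_sq_ne_zero {x y : ℤ} (h : (x, y) ≠ 0) : x ^ 2 - 11 * y ^ 2 ≠ 0 := by
  intro h0
  obtain ⟨rfl, rfl⟩ :=
    Zsqrtd.divides_sq_eq_zero_z (d := 11) (x := x) (y := y) (by push_cast; linear_combination h0)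
  exact h rfl

theorem sq_sub_eleven_mul_sq_emod_four_ne_three (x y : ℤ) : (x ^ 2 - 11 * y ^ 2) % 4 ≠ 3 := by
  intro h
  have hcast : ((x ^ 2 - 11 * y ^ 2 : ℤ) : ZMod 4) = 3 := by
    rw [← ZMod.intCast_mod, Nat.cast_ofNat, h]; rfl
  push_cast at hcast
  have hres : ∀ u v : ZMod 4, u ^ 2 - 11 * v ^ 2 ≠ 3 := by decide
  exact hres x y hcast

theorem sq_sub_eleven_mul_sq_ne_two_mul {n : ℤ} (hn : n % 4 = 1) (x y : ℤ) :
    x ^ 2 - 11 * y ^ 2 ≠ 2 * n := by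
  intro h
  have hcast : ((x ^ 2 - 11 * y ^ 2 : ℤ) : ZMod 8) = 2 := by
    rw [← ZMod.intCast_mod, Nat.cast_ofNat, h, show 2 * n % 8 = 2 by omega]; rfl
  push_cast at hcast
  have hres : ∀ u v : ZMod 8, u ^ 2 - 11 * v ^ 2 ≠ 2 := by decide
  exact hres x y hcast

theorem three_dvd_of_sq_sub_eleven_mul_sq_eq_three_mul {x y n : ℤ}
    (h : x ^ 2 - 11 * y ^ 2 = 3 * n) : 3 ∣ n := by
  have hcast : (x : ZMod 3) ^ 2 - 11 * (y : ZMod 3) ^ 2 = 0 := by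
    have := congrArg (Int.cast : ℤ → ZMod 3) h
    push_cast at this
    rw [this, show (3 : ZMod 3) = 0 from rfl, zero_mul]
  have hres : ∀ u v : ZMod 3, u ^ 2 - 11 * v ^ 2 = 0 → u = 0 ∧ v = 0 := by decide
  have hxy := hres x y hcast
  obtain ⟨u, rfl⟩ := (ZMod.intCast_zmod_eq_zero_iff_dvd x 3).mp hxy.1
  obtain ⟨v, rfl⟩ := (ZMod.intCast_zmod_eq_zero_iff_dvd y 3).mp hxy.2
  exact ⟨u ^ 2 - 11 * v ^ 2, by push_cast at h; linarith⟩

theorem exists_eq_sq_sub_eleven_mul_sq_of_eq_neg_two_mul {x y n : ℤ}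
    (h : x ^ 2 - 11 * y ^ 2 = -2 * n) : ∃ a b : ℤ, n = a ^ 2 - 11 * b ^ 2 := by
  have hpar : Even (x - y) := by
    have : Even (x ^ 2 - y ^ 2) := ⟨5 * y ^ 2 - n, by linear_combination h⟩
    simpa [parity_simps] using this
  obtain ⟨t, ht⟩ := hpar
  obtain rfl : x = y + 2 * t := by linarith
  -- `(x + y√11)(3 + √11) / 2`, as `3 + √11` has norm `-2`
  exact ⟨7 * y + 3 * t, 2 * y + t, by linarith⟩

theorem exists_sq_sub_eleven_mul_sq_eq_mul {p : ℕ} [NeZero p] {r : ZMod p} (hr : r ^ 2 = 11) :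
    ∃ x y k : ℤ, x ^ 2 - 11 * y ^ 2 = k * p ∧ k ≠ 0 ∧ -3 ≤ k ∧ k ≤ 3 := by
  set A := Nat.sqrt (3 * p)
  set B := Nat.sqrt (p / 3)
  have hA : 3 * p < (A + 1) ^ 2 := Nat.lt_succ_sqrt' _
  have hB : p < 3 * (B + 1) ^ 2 := by
    have : p / 3 < (B + 1) ^ 2 := Nat.lt_succ_sqrt' _
    omega
  have hAB : p < (A + 1) * (B + 1) := by nlinarith
  obtain ⟨x, y, hxy, hx, hy, hcong⟩ := ZMod.exists_ne_zero_abs_le_intCast_eq_mul hAB r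
  have hdvd : (p : ℤ) ∣ x ^ 2 - 11 * y ^ 2 := by
    rw [← ZMod.intCast_zmod_eq_zero_iff_dvd]
    push_cast
    rw [hcong, mul_pow, hr, sub_self]
  obtain ⟨k, hk⟩ := hdvd
  have hx2 : x ^ 2 ≤ 3 * p := by
    have hxA : x ^ 2 ≤ (A : ℤ) ^ 2 := sq_le_sq' (by linarith [abs_le.mp hx]) (abs_le.mp hx).2
    have hA3 : ((A ^ 2 : ℕ) : ℤ) ≤ ((3 * p : ℕ) : ℤ) := by exact_mod_cast Nat.sqrt_le' _
    push_cast at hA3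
    linarith
  have hy2 : 3 * y ^ 2 ≤ p := by
    have hyB : y ^ 2 ≤ (B : ℤ) ^ 2 := sq_le_sq' (by linarith [abs_le.mp hy]) (abs_le.mp hy).2
    have hB3 : ((3 * B ^ 2 : ℕ) : ℤ) ≤ (p : ℤ) := by
      have : B ^ 2 ≤ p / 3 := Nat.sqrt_le' _
      exact_mod_cast (by omega : 3 * B ^ 2 ≤ p)
    push_cast at hB3
    linarith
  have hp0 : (0 : ℤ) < p := by exact_mod_cast NeZero.pos p
  refine ⟨x, y, k, by rw [hk, mul_comm], ?_, ?_, ?_⟩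
  · rintro rfl
    exact sq_sub_eleven_mul_sq_ne_zero hxy (by simpa using hk)
  · nlinarith
  · nlinarith

theorem exists_eq_sq_sub_eleven_mul_sq_of_eq_mul {p : ℕ} (hp : p.Prime) (hp4 : p % 4 = 1)
    {x y k : ℤ} (h : x ^ 2 - 11 * y ^ 2 = k * p) (hk0 : k ≠ 0) (hk : -3 ≤ k ∧ k ≤ 3) :
    ∃ a b : ℤ, (p : ℤ) = a ^ 2 - 11 * b ^ 2 := by
  have hp3 : ¬ (3 : ℤ) ∣ p := by
    intro h3
    have := (Nat.prime_dvd_prime_iff_eq Nat.prime_three hp).mp (by exact_mod_cast h3)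
    omega
  obtain rfl | rfl | rfl | rfl | rfl | rfl : k = -3 ∨ k = -2 ∨ k = -1 ∨ k = 1 ∨ k = 2 ∨ k = 3 := by
    omega
  · have h3 := three_dvd_of_sq_sub_eleven_mul_sq_eq_three_mul (h.trans (neg_mul_comm 3 (p : ℤ)))
    exact absurd (Int.dvd_neg.mp h3) hp3
  · exact exists_eq_sq_sub_eleven_mul_sq_of_eq_neg_two_mul h
  · exact absurd (by rw [h]; omega) (sq_sub_eleven_mul_sq_emod_four_ne_three x y)
  · exact ⟨x, y, by linarith⟩
  · exact absurd h (sq_sub_eleven_mul_sq_ne_two_mul (by omega) x y)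
  · exact absurd (three_dvd_of_sq_sub_eleven_mul_sq_eq_three_mul h) hp3

theorem mod_four_eq_one_and_isSquare_of_eq_sq_sub_eleven_mul_sq {p : ℕ} (hp : p.Prime) {a b : ℤ}
    (h : (p : ℤ) = a ^ 2 - 11 * b ^ 2) :
    p % 4 = 1 ∧ IsSquare (p : ZMod 11) ∧ (p : ZMod 11) ≠ 0 := by
  have hp4 : (p : ℤ) % 4 ≠ 3 := h ▸ sq_sub_eleven_mul_sq_emod_four_ne_three a b
  have hp2 : p ≠ 2 := by
    rintro rfl
    push_cast at h
    exact sq_sub_eleven_mul_sq_ne_two_mul (n := 1) rfl a b (by linarith)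
  have hp11 : p ≠ 11 := by rintro rfl; exact hp4 rfl
  refine ⟨by have := hp.eq_two_or_odd; omega, ⟨a, ?_⟩, ?_⟩
  · have := congrArg (Int.cast : ℤ → ZMod 11) h
    push_cast at this
    rw [this, show (11 : ZMod 11) = 0 from rfl]
    ring
  · rw [Ne, ZMod.natCast_eq_zero_iff]
    intro h11
    exact hp11 ((Nat.prime_dvd_prime_iff_eq (by norm_num) hp).mp h11).symm

theorem exists_mem_sq_mod_forty_four_iff (n : ℕ) :
    (∃ j ∈ ({1, 3, 5, 7, 9} : Finset ℕ), n % 44 = j ^ 2 % 44) ↔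
      n % 4 = 1 ∧ IsSquare (n : ZMod 11) ∧ (n : ZMod 11) ≠ 0 := by
  have hres : ∀ m : Fin 11, (IsSquare ((m : ℕ) : ZMod 11) ∧ ((m : ℕ) : ZMod 11) ≠ 0) ↔
      (m : ℕ) ∈ ({1, 3, 4, 5, 9} : Finset ℕ) := by decide
  rw [← ZMod.natCast_mod n 11, hres ⟨n % 11, Nat.mod_lt _ (by norm_num)⟩]
  simp only [Finset.mem_insert, Finset.mem_singleton, exists_eq_or_imp, exists_eq_left]
  omega

theorem stmt_12 (p : ℕ) (hp : p.Prime) :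
    (∃ a b : ℤ, (p : ℤ) = a ^ 2 - 11 * b ^ 2) ↔
    (∃ j ∈ ({1, 3, 5, 7, 9} : Finset ℕ), p % 44 = j ^ 2 % 44) := by
  rw [exists_mem_sq_mod_forty_four_iff]
  constructor
  · rintro ⟨a, b, h⟩
    exact mod_four_eq_one_and_isSquare_of_eq_sq_sub_eleven_mul_sq hp h
  · rintro ⟨hp4, hsq, -⟩
    have := Fact.mk hp
    have := Fact.mk (by norm_num : Nat.Prime 11)
    obtain ⟨r, hr⟩ := (ZMod.exists_sq_eq_prime_iff_of_mod_four_eq_one hp4 (by norm_num)).mpr hsq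
    obtain ⟨x, y, k, h, hk0, hk⟩ :=
      exists_sq_sub_eleven_mul_sq_eq_mul (r := r) (by rw [sq, ← hr]; norm_num)
    exact exists_eq_sq_sub_eleven_mul_sq_of_eq_mul hp hp4 h hk0 hk
end

section
/- An integer t that can be written as t = 3x² − y² with integers x, y is a sum of two squares if and only if t = 2(m² − mn + n²) for some integers m, n. -/
/-!
If the discriminant of an integral binary quadratic form is a non-residue modulo a prime `q`,
then `q` divides each value of the form to an even power: a value divisible by `q` comes from a
pair of multiples of `q`, so one can divide by `q²` and descend. With quadratic reciprocity for
`±3`, this applies to `x² + y²`, `3x² − y²` and `a² − ab + b²` (discriminants `−4`, `12`, `−3`)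
and controls the valuations at all primes except `2` and `3`; there, a descent modulo `4`,
resp. `3`, using both representations of `t` at once, does the job. One concludes with the
two-squares theorem and its analogue for the Eisenstein norm form `a² − ab + b²`, whose
prime case `p ≡ 1 (mod 3)` follows from Thue's lemma.
-/

open NumberTheorySymbols

/-- Quadratic reciprocity as periodicity of `J(a | ·)`; `norm_num` evaluates the symbols below. -/
theorem legendreSym_eq_jacobiSym_emod {q : ℕ} [Fact q.Prime] (hq : q ≠ 2) (a : ℤ) :
    legendreSym q a = J(a | q % (4 * a.natAbs)) := by
  rw [jacobiSym.legendreSym.to_jacobiSym,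
    jacobiSym.mod_right a ((Fact.out : q.Prime).odd_of_ne_two hq)]

theorem legendreSym_three_eq_neg_one {q : ℕ} [Fact q.Prime] (hq : q % 12 = 5 ∨ q % 12 = 7) :
    legendreSym q 3 = -1 := by
  rw [legendreSym_eq_jacobiSym_emod (by omega)]
  rcases hq with hq | hq <;> norm_num [hq]

theorem legendreSym_neg_three_eq_neg_one {q : ℕ} [Fact q.Prime] (hq : q % 12 = 11) :
    legendreSym q (-3) = -1 := by
  rw [legendreSym_eq_jacobiSym_emod (by omega)]
  norm_num [hq]

theorem legendreSym_neg_three_eq_one {q : ℕ} [Fact q.Prime] (hq : q % 3 = 1) :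
    legendreSym q (-3) = 1 := by
  have hq2 : q ≠ 2 := by omega
  have hodd := Nat.odd_iff.mp ((Fact.out : q.Prime).odd_of_ne_two hq2)
  rw [legendreSym_eq_jacobiSym_emod hq2]
  rcases (by omega : q % 12 = 1 ∨ q % 12 = 7) with h | h <;> norm_num [h]

theorem legendreSym_four_mul {q : ℕ} [Fact q.Prime] (hq : q ≠ 2) (a : ℤ) :
    legendreSym q (4 * a) = legendreSym q a := by
  have h2 : ((2 : ℤ) : ZMod q) ≠ 0 := by
    rw [Ne, ZMod.intCast_zmod_eq_zero_iff_dvd]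
    exact fun h =>
      hq ((Nat.prime_dvd_prime_iff_eq Fact.out Nat.prime_two).mp (by exact_mod_cast h))
  rw [show (4 : ℤ) = 2 ^ 2 by norm_num, legendreSym.mul, legendreSym.sq_one' q h2, one_mul]

theorem Int.sq_emod_four_cases (x : ℤ) :
    x % 2 = 0 ∧ x ^ 2 % 4 = 0 ∨ x % 2 = 1 ∧ x ^ 2 % 4 = 1 := by
  obtain ⟨k, rfl | rfl⟩ := Int.even_or_odd' x
  · exact .inl ⟨by omega, by rw [show (2 * k) ^ 2 = 4 * k ^ 2 by ring]; omega⟩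
  · exact .inr ⟨by omega, by rw [show (2 * k + 1) ^ 2 = 4 * (k ^ 2 + k) + 1 by ring]; omega⟩

theorem eq_zero_and_eq_zero_of_quadForm_eq_zero {K : Type*} [Field K] {a b c x y : K}
    (hd : ¬IsSquare (discrim a b c)) (h : a * x ^ 2 + b * x * y + c * y ^ 2 = 0) :
    x = 0 ∧ y = 0 := by
  by_cases hy : y = 0
  · refine ⟨?_, hy⟩
    by_contra hx
    have ha : a = 0 := by simpa [hy, hx] using h
    exact hd ⟨b, by rw [discrim, ha]; ring⟩
  · refine absurd ⟨_, (discrim_eq_sq_of_quadratic_eq_zero (x := x / y) ?_).trans (sq _)⟩ hd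
    field_simp
    linear_combination h

theorem Int.dvd_and_dvd_of_dvd_quadForm {q : ℕ} [Fact q.Prime] {a b c : ℤ}
    (hd : legendreSym q (discrim a b c) = -1) {x y : ℤ}
    (h : (q : ℤ) ∣ a * x ^ 2 + b * x * y + c * y ^ 2) : (q : ℤ) ∣ x ∧ (q : ℤ) ∣ y := by
  rw [legendreSym.eq_neg_one_iff] at hd
  simp only [← ZMod.intCast_zmod_eq_zero_iff_dvd] at h ⊢
  push_cast [discrim] at h hd
  exact eq_zero_and_eq_zero_of_quadForm_eq_zero hd h

theorem even_padicValInt_of_descent {q : ℕ} [Fact q.Prime] {P : ℤ → Prop}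
    (hP : ∀ n, n ≠ 0 → P n → (q : ℤ) ∣ n → ∃ m, n = q ^ 2 * m ∧ P m) {n : ℤ} (hn : P n) :
    Even (padicValInt q n) := by
  induction hk : n.natAbs using Nat.strong_induction_on generalizing n with
  | _ k ih =>
  by_cases hn0 : n = 0
  · simp [hn0]
  by_cases hqn : (q : ℤ) ∣ n
  · obtain ⟨m, rfl, hm⟩ := hP n hn0 hn hqn
    have hm0 : m ≠ 0 := by rintro rfl; simp at hn0
    have hq2 : ((q : ℤ) ^ 2) ≠ 0 := pow_ne_zero 2 (by exact_mod_cast (Fact.out : q.Prime).ne_zero)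
    have hlt : m.natAbs < ((q : ℤ) ^ 2 * m).natAbs := by
      rw [Int.natAbs_mul, Int.natAbs_pow, Int.natAbs_natCast]
      have := (Fact.out : q.Prime).two_le
      exact lt_mul_left (Int.natAbs_pos.mpr hm0) (by nlinarith)
    rw [padicValInt.mul hq2 hm0, show (q : ℤ) ^ 2 = ((q ^ 2 : ℕ) : ℤ) by push_cast; rfl,
      padicValInt.of_nat, padicValNat.prime_pow]
    exact even_two.add (ih _ (hk ▸ hlt) hm rfl)
  · rw [padicValInt.eq_zero_of_not_dvd hqn]
    exact Even.zero

theorem even_padicValInt_of_eq_quadForm {q : ℕ} [Fact q.Prime] {a b c n x y : ℤ}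
    (hd : legendreSym q (discrim a b c) = -1) (hn : n = a * x ^ 2 + b * x * y + c * y ^ 2) :
    Even (padicValInt q n) := by
  refine even_padicValInt_of_descent (P := fun n => ∃ x y, n = a * x ^ 2 + b * x * y + c * y ^ 2)
    ?_ ⟨x, y, hn⟩
  rintro n - ⟨x, y, rfl⟩ hq
  obtain ⟨⟨x, rfl⟩, ⟨y, rfl⟩⟩ := Int.dvd_and_dvd_of_dvd_quadForm hd hq
  exact ⟨_, by ring, x, y, rfl⟩

theorem padicValInt_two_mul {q : ℕ} [Fact q.Prime] (hq : q ≠ 2) (n : ℤ) :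
    padicValInt q (2 * n) = padicValInt q n := by
  rcases eq_or_ne n 0 with rfl | hn0
  · simp
  rw [padicValInt.mul two_ne_zero hn0, padicValInt.eq_zero_of_not_dvd, zero_add]
  exact fun h => hq ((Nat.prime_dvd_prime_iff_eq Fact.out Nat.prime_two).mp (by exact_mod_cast h))

/-- The norms `a ^ 2 - a * b + b ^ 2` of the Eisenstein integers `a + b * ω`, where
`ω ^ 2 + ω + 1 = 0`. -/
def eisensteinNorms : Submonoid ℤ where
  carrier := {n | ∃ a b : ℤ, n = a ^ 2 - a * b + b ^ 2}
  one_mem' := ⟨1, 0, by ring⟩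
  mul_mem' := by
    rintro _ _ ⟨a, b, rfl⟩ ⟨c, d, rfl⟩
    exact ⟨a * c - b * d, a * d + b * c - b * d, by ring⟩

theorem mem_eisensteinNorms {n : ℤ} :
    n ∈ eisensteinNorms ↔ ∃ a b : ℤ, n = a ^ 2 - a * b + b ^ 2 := Iff.rfl

theorem sq_add_three_mul_sq_mem_eisensteinNorms (a b : ℤ) :
    a ^ 2 + 3 * b ^ 2 ∈ eisensteinNorms :=
  ⟨a + b, 2 * b, by ring⟩

theorem Int.exists_abs_le_sqrt_dvd_sub_mul (n : ℕ) [NeZero n] (s : ℤ) :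
    ∃ x y : ℤ, (x ≠ 0 ∨ y ≠ 0) ∧ |x| ≤ n.sqrt ∧ |y| ≤ n.sqrt ∧ (n : ℤ) ∣ x - s * y := by
  set k := n.sqrt
  have hcard : (Finset.univ : Finset (ZMod n)).card <
      (Finset.range (k + 1) ×ˢ Finset.range (k + 1)).card := by
    rw [Finset.card_univ, ZMod.card, Finset.card_product, Finset.card_range]
    exact Nat.lt_succ_sqrt n
  obtain ⟨⟨i, j⟩, hij, ⟨i', j'⟩, hij', hne, heq⟩ :=
    Finset.exists_ne_map_eq_of_card_lt_of_maps_to hcard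
      (f := fun p : ℕ × ℕ => ((p.1 - s * p.2 : ℤ) : ZMod n)) (fun _ _ => Finset.mem_univ _)
  simp only [Finset.mem_product, Finset.mem_range] at hij hij'
  refine ⟨i - i', j - j', ?_, ?_, ?_, ?_⟩
  · by_contra! h
    exact hne (Prod.ext (by omega) (by omega))
  · rw [abs_le]; omega
  · rw [abs_le]; omega
  · rw [← ZMod.intCast_zmod_eq_zero_iff_dvd]
    simp only at heq
    push_cast at heq ⊢
    linear_combination heq

theorem Nat.Prime.mem_eisensteinNorms {p : ℕ} (hp : p.Prime) (h : p % 3 = 1) :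
    (p : ℤ) ∈ eisensteinNorms := by
  have := Fact.mk hp
  have hp2 : p % 2 = 1 := Nat.odd_iff.mp (hp.odd_of_ne_two (by omega))
  obtain ⟨s, hs⟩ : IsSquare ((-3 : ℤ) : ZMod p) := by
    by_contra hns
    have := (legendreSym.eq_neg_one_iff p).mpr hns
    rw [legendreSym_neg_three_eq_one h] at this
    norm_num at this
  obtain ⟨x, y, hxy0, hx, hy, hdvd⟩ := Int.exists_abs_le_sqrt_dvd_sub_mul p (s.val : ℤ)
  have hs3 : (p : ℤ) ∣ (s.val : ℤ) ^ 2 + 3 := by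
    rw [← ZMod.intCast_zmod_eq_zero_iff_dvd]
    push_cast at hs ⊢
    rw [ZMod.natCast_zmod_val]
    linear_combination -hs
  obtain ⟨c, hc⟩ : (p : ℤ) ∣ x ^ 2 + 3 * y ^ 2 :=
    (dvd_add (hdvd.mul_right (x + s.val * y)) (hs3.mul_left (y ^ 2))).trans ⟨1, by ring⟩
  have hk : (p.sqrt : ℤ) ^ 2 < p := by
    have : p.sqrt ^ 2 < p := by
      rw [sq]
      exact (Nat.sqrt_le p).lt_of_ne fun h => hp.prime.not_isSquare ⟨_, h.symm⟩
    exact_mod_cast this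
  have hx2 : x ^ 2 ≤ (p.sqrt : ℤ) ^ 2 := sq_le_sq' (abs_le.mp hx).1 (abs_le.mp hx).2
  have hy2 : y ^ 2 ≤ (p.sqrt : ℤ) ^ 2 := sq_le_sq' (abs_le.mp hy).1 (abs_le.mp hy).2
  have hpos : 0 < x ^ 2 + 3 * y ^ 2 := by
    rcases hxy0 with h0 | h0 <;> positivity
  have hc0 : 0 < c := pos_of_mul_pos_right (hc ▸ hpos) (by positivity)
  have hc4 : c < 4 := lt_of_mul_lt_mul_left (by nlinarith) (by positivity : (0 : ℤ) ≤ p)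
  -- By size, `x² + 3y² ∈ {p, 2p, 3p}`; `2p` is impossible modulo 4.
  interval_cases c
  · rw [show (p : ℤ) = x ^ 2 + 3 * y ^ 2 by linarith]
    exact sq_add_three_mul_sq_mem_eisensteinNorms x y
  · rcases Int.sq_emod_four_cases x with hx | hx <;>
      rcases Int.sq_emod_four_cases y with hy | hy <;> omega
  · obtain ⟨z, rfl⟩ : (3 : ℤ) ∣ x :=
      Int.prime_three.dvd_of_dvd_pow (n := 2) ⟨p - y ^ 2, by linarith⟩
    rw [show (p : ℤ) = y ^ 2 + 3 * z ^ 2 by linarith]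
    exact sq_add_three_mul_sq_mem_eisensteinNorms y z

theorem mem_eisensteinNorms_of_even_padicValInt {n : ℤ} (hn : 0 ≤ n)
    (h : ∀ q : ℕ, q.Prime → q % 3 = 2 → Even (padicValInt q n)) : n ∈ eisensteinNorms := by
  lift n to ℕ using hn
  rcases eq_or_ne n 0 with rfl | hn0
  · exact ⟨0, 0, by ring⟩
  rw [← Nat.prod_factorization_pow_eq_self hn0, Nat.cast_finsuppProd]
  refine SubmonoidClass.finsuppProd_mem _ _ _ fun p hpn => ?_
  have hp : p.Prime := Nat.prime_of_mem_primeFactors (Finsupp.mem_support_iff.mpr hpn)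
  push_cast
  rcases (by omega : p % 3 = 0 ∨ p % 3 = 1 ∨ p % 3 = 2) with h3 | h3 | h3
  · obtain rfl : p = 3 := ((Nat.prime_dvd_prime_iff_eq Nat.prime_three hp).mp
      (Nat.dvd_of_mod_eq_zero h3)).symm
    exact pow_mem (mem_eisensteinNorms.mpr ⟨1, -1, by norm_num⟩) _
  · exact pow_mem (hp.mem_eisensteinNorms h3) _
  · have := Fact.mk hp
    obtain ⟨k, hk⟩ := h p hp h3
    rw [padicValInt.of_nat, ← Nat.factorization_def n hp, ← two_mul] at hk
    rw [hk, pow_mul]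
    exact ⟨(p : ℤ) ^ k, 0, by ring⟩

theorem Int.exists_sq_add_sq_of_even_padicValInt {n : ℤ} (hn : 0 ≤ n)
    (h : ∀ q : ℕ, q.Prime → q % 4 = 3 → Even (padicValInt q n)) :
    ∃ u v : ℤ, n = u ^ 2 + v ^ 2 := by
  lift n to ℕ using hn
  obtain ⟨u, v, huv⟩ := Nat.eq_sq_add_sq_iff.mpr fun q hq hq4 => by
    simpa using h q (Nat.prime_of_mem_primeFactors hq) hq4
  exact ⟨u, v, by exact_mod_cast huv⟩

theorem two_dvd_of_sq_add_sq_eq_three_mul_sq_sub_sq {u v x y : ℤ}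
    (h : u ^ 2 + v ^ 2 = 3 * x ^ 2 - y ^ 2) : 2 ∣ u ^ 2 + v ^ 2 := by
  rcases Int.sq_emod_four_cases u with hu | hu <;>
    rcases Int.sq_emod_four_cases v with hv | hv <;>
    rcases Int.sq_emod_four_cases x with hx | hx <;>
    rcases Int.sq_emod_four_cases y with hy | hy <;> omega

theorem even_padicValInt_two_of_two_mul_eq_sq_add_sq {L u v x y : ℤ} (huv : 2 * L = u ^ 2 + v ^ 2)
    (hxy : 2 * L = 3 * x ^ 2 - y ^ 2) : Even (padicValInt 2 L) := by
  have := Fact.mk Nat.prime_two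
  refine even_padicValInt_of_descent (q := 2)
    (P := fun L => (∃ u v, 2 * L = u ^ 2 + v ^ 2) ∧ ∃ x y, 2 * L = 3 * x ^ 2 - y ^ 2) ?_
    ⟨⟨u, v, huv⟩, x, y, hxy⟩
  rintro L - ⟨⟨u, v, huv⟩, x, y, hxy⟩ hL
  push_cast at hL ⊢
  obtain ⟨⟨u, rfl⟩, ⟨v, rfl⟩⟩ : 2 ∣ u ∧ 2 ∣ v := by
    rcases Int.sq_emod_four_cases u with hu | hu <;>
      rcases Int.sq_emod_four_cases v with hv | hv <;> omega
  obtain ⟨⟨x, rfl⟩, ⟨y, rfl⟩⟩ : 2 ∣ x ∧ 2 ∣ y := by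
    rcases Int.sq_emod_four_cases x with hx | hx <;>
      rcases Int.sq_emod_four_cases y with hy | hy <;> omega
  obtain ⟨m, hm⟩ := two_dvd_of_sq_add_sq_eq_three_mul_sq_sub_sq
    (show u ^ 2 + v ^ 2 = 3 * x ^ 2 - y ^ 2 by linarith)
  exact ⟨m, by linarith, ⟨u, v, by linarith⟩, x, y, by linarith⟩

theorem exists_eq_two_mul_eisensteinNorm_of_eq_sq_add_sq {t u v x y : ℤ}
    (huv : t = u ^ 2 + v ^ 2) (hxy : t = 3 * x ^ 2 - y ^ 2) :
    ∃ m n : ℤ, t = 2 * (m ^ 2 - m * n + n ^ 2) := by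
  obtain ⟨L, hL⟩ := two_dvd_of_sq_add_sq_eq_three_mul_sq_sub_sq (huv.symm.trans hxy)
  rw [← huv] at hL
  subst hL
  suffices L ∈ eisensteinNorms by
    obtain ⟨m, n, hmn⟩ := this
    exact ⟨m, n, by rw [hmn]⟩
  refine mem_eisensteinNorms_of_even_padicValInt (by nlinarith [sq_nonneg u, sq_nonneg v])
    fun q hq hq3 => ?_
  have := Fact.mk hq
  rcases eq_or_ne q 2 with rfl | hq2
  · exact even_padicValInt_two_of_two_mul_eq_sq_add_sq huv hxy
  have hq_odd := Nat.odd_iff.mp (hq.odd_of_ne_two hq2)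
  rw [← padicValInt_two_mul hq2]
  rcases (by omega : q % 4 = 1 ∨ q % 4 = 3) with hq4 | hq4
  · have hd : legendreSym q (discrim 3 0 (-1)) = -1 := by
      rw [show discrim (3 : ℤ) 0 (-1) = 4 * 3 by norm_num [discrim], legendreSym_four_mul hq2]
      exact legendreSym_three_eq_neg_one (by omega)
    exact even_padicValInt_of_eq_quadForm (x := x) (y := y) hd (by rw [hxy]; ring)
  · have hd : legendreSym q (discrim 1 0 1) = -1 := by
      rw [show discrim (1 : ℤ) 0 1 = 4 * (-1) by norm_num [discrim], legendreSym_four_mul hq2,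
        legendreSym.at_neg_one hq2, ZMod.χ₄_nat_three_mod_four hq4]
    exact even_padicValInt_of_eq_quadForm (x := u) (y := v) hd (by rw [huv]; ring)

theorem even_padicValInt_three_of_eq_two_mul_eisensteinNorm {t x y m n : ℤ}
    (hxy : t = 3 * x ^ 2 - y ^ 2) (hmn : t = 2 * (m ^ 2 - m * n + n ^ 2)) : Even (padicValInt 3 t) := by
  have := Fact.mk Nat.prime_three
  refine even_padicValInt_of_descent (q := 3)
    (P := fun t => (∃ x y, t = 3 * x ^ 2 - y ^ 2) ∧ ∃ m n, t = 2 * (m ^ 2 - m * n + n ^ 2)) ?_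
    ⟨⟨x, y, hxy⟩, m, n, hmn⟩
  rintro t - ⟨⟨x, y, hxy⟩, m, n, hmn⟩ ⟨c, hc⟩
  push_cast at hc
  obtain ⟨z, rfl⟩ : (3 : ℤ) ∣ y :=
    Int.prime_three.dvd_of_dvd_pow (n := 2) ⟨x ^ 2 - c, by linarith⟩
  obtain ⟨j, hj⟩ : (3 : ℤ) ∣ m + n := by
    have : (3 : ℤ) ∣ m ^ 2 - m * n + n ^ 2 :=
      (Int.prime_three.dvd_or_dvd ⟨c, hmn ▸ hc⟩).resolve_left (by norm_num)
    exact Int.prime_three.dvd_of_dvd_pow (n := 2)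
      ((dvd_add this (dvd_mul_right 3 (m * n))).trans ⟨1, by ring⟩)
  obtain rfl : m = 3 * j - n := by linarith
  -- Now `x² - 2n² ≡ 0 (mod 3)`, and `8` is a non-residue modulo `3`.
  have hd : legendreSym 3 (discrim 1 0 (-2)) = -1 := by
    rw [jacobiSym.legendreSym.to_jacobiSym]
    norm_num [discrim]
  obtain ⟨⟨w, rfl⟩, ⟨k, rfl⟩⟩ := Int.dvd_and_dvd_of_dvd_quadForm (x := x) (y := n) hd
    ⟨z ^ 2 + 2 * j ^ 2 - 2 * j * n, by push_cast; linarith⟩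
  push_cast at hxy hmn
  refine ⟨3 * w ^ 2 - z ^ 2, by push_cast; linear_combination hxy, ⟨w, z, rfl⟩, j - k, k, ?_⟩
  linarith

theorem exists_eq_sq_add_sq_of_eq_two_mul_eisensteinNorm {t x y m n : ℤ}
    (hxy : t = 3 * x ^ 2 - y ^ 2) (hmn : t = 2 * (m ^ 2 - m * n + n ^ 2)) :
    ∃ u v : ℤ, t = u ^ 2 + v ^ 2 := by
  refine Int.exists_sq_add_sq_of_even_padicValInt
    (by nlinarith [sq_nonneg (m - n), sq_nonneg m, sq_nonneg n]) fun q hq hq4 => ?_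
  have := Fact.mk hq
  rcases (by omega : q % 12 = 3 ∨ q % 12 = 7 ∨ q % 12 = 11) with h | h | h
  · obtain rfl : q = 3 := ((Nat.prime_dvd_prime_iff_eq Nat.prime_three hq).mp
      (by omega)).symm
    exact even_padicValInt_three_of_eq_two_mul_eisensteinNorm hxy hmn
  · have hd : legendreSym q (discrim 3 0 (-1)) = -1 := by
      rw [show discrim (3 : ℤ) 0 (-1) = 4 * 3 by norm_num [discrim],
        legendreSym_four_mul (by omega)]
      exact legendreSym_three_eq_neg_one (.inr h)
    exact even_padicValInt_of_eq_quadForm (x := x) (y := y) hd (by rw [hxy]; ring)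
  · have hd : legendreSym q (discrim 1 (-1) 1) = -1 := by
      rw [show discrim (1 : ℤ) (-1) 1 = -3 by norm_num [discrim]]
      exact legendreSym_neg_three_eq_neg_one h
    rw [hmn, padicValInt_two_mul (by omega)]
    exact even_padicValInt_of_eq_quadForm (x := m) (y := n) hd (by ring)

theorem stmt_13 (t : ℤ) (h : ∃ x y : ℤ, t = 3 * x ^ 2 - y ^ 2) :
    (∃ u v : ℤ, t = u ^ 2 + v ^ 2) ↔
    (∃ m n : ℤ, t = 2 * (m ^ 2 - m * n + n ^ 2)) := by
  obtain ⟨x, y, hxy⟩ := h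
  constructor
  · rintro ⟨u, v, huv⟩
    exact exists_eq_two_mul_eisensteinNorm_of_eq_sq_add_sq huv hxy
  · rintro ⟨m, n, hmn⟩
    exact exists_eq_sq_add_sq_of_eq_two_mul_eisensteinNorm hxy hmn
end

section
/- For a prime p > 17: either p = a² + 17b² or 2p = a² + 17b² holds for some positive integers a, b if and only if p ≡ (2j+1)² (mod 68) for some j ∈ {0, 1, ..., 7}. -/
/-!
If `p = a² + 17b²` or `2p = a² + 17b²`, then `p` is a square mod 17 and, looking mod 8, `p ≡ 1 (mod 4)`;
these two conditions together say exactly that `p` is an odd square mod 68.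

Conversely, when `p ≡ 1 (mod 4)` and `p` is a square mod 17, quadratic reciprocity makes `-17` a
square `r²` mod `p`. Thue's lemma gives a small nonzero solution of `x ≡ r y (mod p)`, with
`x² ≤ 4p` and `y² ≤ p / 4`, so `x² + 17y² = kp` with `1 ≤ k ≤ 8`. Reducing mod 17 forces `k` to be
a square mod 17, i.e. `k ∈ {1, 2, 4, 8}`, and for `k = 4, 8` both `x` and `y` are even, so we can
divide by 4.
-/

instance Nat.fact_prime_seventeen : Fact (Nat.Prime 17) := ⟨by norm_num⟩

theorem IsSquare.right_of_mul {K : Type*} [CommGroupWithZero K] {a b : K}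
    (hab : IsSquare (a * b)) (ha : a ≠ 0) (hsa : IsSquare a) : IsSquare b := by
  simpa [ha] using hab.div hsa

/-- Thue's lemma, by pigeonhole on the values of `u - r v`. -/
theorem ZMod.exists_intCast_eq_mul_intCast_of_lt_mul {n : ℕ} [NeZero n] {A B : ℕ}
    (h : n < (A + 1) * (B + 1)) (r : ZMod n) :
    ∃ x y : ℤ, (x, y) ≠ (0, 0) ∧ x.natAbs ≤ A ∧ y.natAbs ≤ B ∧ (x : ZMod n) = r * y := by
  have hcard : Fintype.card (ZMod n) < Fintype.card (Fin (A + 1) × Fin (B + 1)) := by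
    simpa [ZMod.card] using h
  obtain ⟨u, v, huv, huv_eq⟩ := Fintype.exists_ne_map_eq_of_card_lt
    (fun z : Fin (A + 1) × Fin (B + 1) => ((z.1 : ℕ) : ZMod n) - r * ((z.2 : ℕ) : ZMod n)) hcard
  refine ⟨(u.1 : ℤ) - v.1, (u.2 : ℤ) - v.2, ?_, by omega, by omega, ?_⟩
  · intro h0
    simp only [Prod.mk.injEq, sub_eq_zero, Nat.cast_inj] at h0
    exact huv (Prod.ext (Fin.ext h0.1) (Fin.ext h0.2))
  · push_cast
    linear_combination huv_eq

theorem lt_succ_sqrt_four_mul_mul_succ_sqrt_div_four (p : ℕ) :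
    p < (Nat.sqrt (4 * p) + 1) * (Nat.sqrt (p / 4) + 1) := by
  have hA := Nat.lt_succ_sqrt' (4 * p)
  have hB := Nat.lt_succ_sqrt' (p / 4)
  have hp : p < 4 * (p / 4 + 1) := by omega
  by_contra! h
  nlinarith [Nat.mul_le_mul hA hB, Nat.mul_le_mul h h]

theorem sq_add_seventeen_sq_mod (a b m : ℕ) :
    (a ^ 2 + 17 * b ^ 2) % m = ((a % m) ^ 2 + 17 * (b % m) ^ 2) % m := by
  simp [Nat.add_mod, Nat.pow_mod, Nat.mul_mod]

theorem isSquare_zmod_seventeen_sq_add_seventeen_sq (a b : ℕ) :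
    IsSquare ((a ^ 2 + 17 * b ^ 2 : ℕ) : ZMod 17) :=
  ⟨a, by push_cast; linear_combination (b : ZMod 17) ^ 2 * (by decide : (17 : ZMod 17) = 0)⟩

theorem mod_four_eq_one_of_mul_eq_sq_add_seventeen_sq {k n a b : ℕ} (hk : k = 1 ∨ k = 2)
    (hn : n % 2 = 1) (h : k * n = a ^ 2 + 17 * b ^ 2) : n % 4 = 1 := by
  have key : ∀ u < 8, ∀ v < 8, ∀ r < 8, r % 2 = 1 →
      (r = (u ^ 2 + 17 * v ^ 2) % 8 ∨ 2 * r % 8 = (u ^ 2 + 17 * v ^ 2) % 8) → r % 4 = 1 := by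
    decide
  have hmod : k * n % 8 = ((a % 8) ^ 2 + 17 * (b % 8) ^ 2) % 8 := by
    rw [h, sq_add_seventeen_sq_mod]
  have := key (a % 8) (by omega) (b % 8) (by omega) (n % 8) (by omega) (by omega)
    (by rcases hk with rfl | rfl <;> omega)
  omega

theorem mod_four_eq_one_and_isSquare_of_mul_eq_sq_add_seventeen_sq {k n a b : ℕ}
    (hk : k = 1 ∨ k = 2) (hn : n % 2 = 1) (h : k * n = a ^ 2 + 17 * b ^ 2) :
    n % 4 = 1 ∧ IsSquare (n : ZMod 17) := by
  refine ⟨mod_four_eq_one_of_mul_eq_sq_add_seventeen_sq hk hn h, ?_⟩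
  have hk0 : (k : ZMod 17) ≠ 0 := by rcases hk with rfl | rfl <;> decide
  have hks : IsSquare (k : ZMod 17) := by rcases hk with rfl | rfl <;> decide
  refine IsSquare.right_of_mul ?_ hk0 hks
  rw [← Nat.cast_mul, h]
  exact isSquare_zmod_seventeen_sq_add_seventeen_sq a b

theorem isSquare_neg_seventeen {p : ℕ} [Fact p.Prime] (h4 : p % 4 = 1)
    (h17 : IsSquare (p : ZMod 17)) : IsSquare (-17 : ZMod p) := by
  have hneg : IsSquare (-1 : ZMod p) := ZMod.exists_sq_eq_neg_one_iff.2 (by omega)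
  have hpos : IsSquare ((17 : ℕ) : ZMod p) :=
    (ZMod.exists_sq_eq_prime_iff_of_mod_four_eq_one h4 (by norm_num)).2 h17
  simpa using hneg.mul hpos

theorem exists_mul_eq_sq_add_seventeen_sq {p : ℕ} [Fact p.Prime] (hp17 : 17 < p)
    (h : IsSquare (-17 : ZMod p)) :
    ∃ k x y : ℕ, 0 < k ∧ k ≤ 8 ∧ 0 < x ∧ 0 < y ∧ k * p = x ^ 2 + 17 * y ^ 2 := by
  obtain ⟨r, hr⟩ := h
  obtain ⟨x, y, hxy, hxA, hyB, hxr⟩ := ZMod.exists_intCast_eq_mul_intCast_of_lt_mul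
    (lt_succ_sqrt_four_mul_mul_succ_sqrt_div_four p) r
  have hx4 : x.natAbs ^ 2 ≤ 4 * p := (Nat.pow_le_pow_left hxA 2).trans (Nat.sqrt_le' _)
  have hy4 : y.natAbs ^ 2 ≤ p / 4 := (Nat.pow_le_pow_left hyB 2).trans (Nat.sqrt_le' _)
  have hxp : x.natAbs < p := by nlinarith
  have hyp : y.natAbs < p := by nlinarith [Nat.div_le_self p 4]
  have hr0 : r ≠ 0 := by
    rintro rfl
    have : ((17 : ℕ) : ZMod p) = 0 := by simpa [neg_eq_zero] using hr
    rw [ZMod.natCast_eq_zero_iff] at this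
    exact absurd (Nat.le_of_dvd (by norm_num) this) (by omega)
  -- `x ≡ r y` with `r ≠ 0`, and `|x|, |y| < p`
  have hx0 : x = 0 ↔ y = 0 := by
    have hzero (z : ℤ) (hz : z.natAbs < p) : (z : ZMod p) = 0 ↔ z = 0 :=
      ⟨fun h => Int.eq_zero_of_dvd_of_natAbs_lt_natAbs
        ((ZMod.intCast_zmod_eq_zero_iff_dvd z p).1 h) hz, by rintro rfl; simp⟩
    rw [← hzero x hxp, ← hzero y hyp, hxr, mul_eq_zero, or_iff_right hr0]
  have hx : x ≠ 0 := fun h0 => hxy (by simp [h0, hx0.1 h0])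
  have hy : y ≠ 0 := fun h0 => hx (hx0.2 h0)
  obtain ⟨k, hk⟩ : p ∣ x.natAbs ^ 2 + 17 * y.natAbs ^ 2 := by
    rw [← ZMod.natCast_eq_zero_iff]
    have hcast : ((x.natAbs ^ 2 + 17 * y.natAbs ^ 2 : ℕ) : ℤ) = x ^ 2 + 17 * y ^ 2 := by
      push_cast [sq_abs]; rfl
    rw [← Int.cast_natCast, hcast]
    push_cast
    rw [hxr]
    linear_combination (-(y : ZMod p) ^ 2) * hr
  refine ⟨k, x.natAbs, y.natAbs, ?_, ?_, Int.natAbs_pos.2 hx, Int.natAbs_pos.2 hy,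
    by rw [hk, mul_comm]⟩
  · exact Nat.pos_of_ne_zero (by rintro rfl; simp [hx] at hk)
  · have : p * k < p * 9 := by have := Nat.mul_div_le p 4; omega
    exact Nat.lt_succ_iff.1 (Nat.lt_of_mul_lt_mul_left this)

theorem eq_one_or_two_or_four_or_eight_of_isSquare {k : ℕ} (hk0 : 0 < k) (hk8 : k ≤ 8)
    (h : IsSquare (k : ZMod 17)) : k = 1 ∨ k = 2 ∨ k = 4 ∨ k = 8 := by
  revert h
  interval_cases k <;> decide

theorem even_of_four_dvd_sq_add_seventeen_sq {x y : ℕ} (h : 4 ∣ x ^ 2 + 17 * y ^ 2) :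
    2 ∣ x ∧ 2 ∣ y := by
  have key : ∀ u < 4, ∀ v < 4, (u ^ 2 + 17 * v ^ 2) % 4 = 0 → u % 2 = 0 ∧ v % 2 = 0 := by decide
  have := key (x % 4) (by omega) (y % 4) (by omega) (by rw [← sq_add_seventeen_sq_mod]; omega)
  omega

theorem exists_eq_sq_add_seventeen_sq_of_four_mul {m x y : ℕ} (hx : 0 < x) (hy : 0 < y)
    (h : 4 * m = x ^ 2 + 17 * y ^ 2) : ∃ a b : ℕ, 0 < a ∧ 0 < b ∧ m = a ^ 2 + 17 * b ^ 2 := by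
  obtain ⟨⟨a, rfl⟩, ⟨b, rfl⟩⟩ := even_of_four_dvd_sq_add_seventeen_sq (h ▸ dvd_mul_right 4 m)
  exact ⟨a, b, by omega, by omega, by linarith⟩

theorem exists_odd_sq_mod_sixtyEight_iff {n : ℕ} (hn : ¬ 17 ∣ n) :
    (∃ j ≤ 7, n % 68 = (2 * j + 1) ^ 2 % 68) ↔ n % 4 = 1 ∧ IsSquare (n : ZMod 17) := by
  have hlt : n % 68 < 68 := Nat.mod_lt _ (by norm_num)
  have hn' : n % 68 % 17 ≠ 0 := by omega
  rw [← Nat.mod_mod_of_dvd n (by norm_num : 4 ∣ 68),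
    ← ZMod.natCast_mod n 17, ← Nat.mod_mod_of_dvd n (by norm_num : 17 ∣ 68), ZMod.natCast_mod]
  generalize n % 68 = m at hlt hn' ⊢
  revert m
  decide

theorem stmt_16 (p : ℕ) (hp : p.Prime) (hp17 : 17 < p) :
    ((∃ a b : ℕ, 0 < a ∧ 0 < b ∧ p = a ^ 2 + 17 * b ^ 2) ∨
     (∃ a b : ℕ, 0 < a ∧ 0 < b ∧ 2 * p = a ^ 2 + 17 * b ^ 2)) ↔
    (∃ j ≤ 7, p % 68 = (2 * j + 1) ^ 2 % 68) := by
  have : Fact p.Prime := ⟨hp⟩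
  have hodd : p % 2 = 1 := Nat.odd_iff.1 (hp.odd_of_ne_two (by omega))
  have h17 : ¬ 17 ∣ p := fun h => by
    have := (Nat.prime_dvd_prime_iff_eq (by norm_num) hp).1 h
    omega
  rw [exists_odd_sq_mod_sixtyEight_iff h17]
  constructor
  · rintro (⟨a, b, -, -, h⟩ | ⟨a, b, -, -, h⟩)
    · exact mod_four_eq_one_and_isSquare_of_mul_eq_sq_add_seventeen_sq (Or.inl rfl) hodd
        (by rwa [one_mul])
    · exact mod_four_eq_one_and_isSquare_of_mul_eq_sq_add_seventeen_sq (Or.inr rfl) hodd h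
  · rintro ⟨h4, hsq⟩
    obtain ⟨k, x, y, hk0, hk8, hx, hy, h⟩ :=
      exists_mul_eq_sq_add_seventeen_sq hp17 (isSquare_neg_seventeen h4 hsq)
    have hk : IsSquare (k : ZMod 17) := by
      refine IsSquare.right_of_mul ?_ (by rwa [Ne, ZMod.natCast_eq_zero_iff]) hsq
      rw [← Nat.cast_mul, mul_comm, h]
      exact isSquare_zmod_seventeen_sq_add_seventeen_sq x y
    rcases eq_one_or_two_or_four_or_eight_of_isSquare hk0 hk8 hk with rfl | rfl | rfl | rfl
    · exact Or.inl ⟨x, y, hx, hy, by rwa [one_mul] at h⟩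
    · exact Or.inr ⟨x, y, hx, hy, h⟩
    · exact Or.inl (exists_eq_sq_add_seventeen_sq_of_four_mul hx hy h)
    · exact Or.inr (exists_eq_sq_add_seventeen_sq_of_four_mul hx hy (by rw [← h]; ring))
end

section
/- For a prime p > 17, the two representations p = a² + 17b² and 2p = x² + 17y² (with positive integers a, b, x, y) are mutually exclusive: no prime p > 17 admits both. -/
lemma aux_key (P u v : ℤ) (hP : Prime P) (h17 : ¬ P ∣ 17) (hu : P ∣ u)
    (h : u ^ 2 + 17 * v ^ 2 = 2 * P ^ 2) : False := by
  have hPv : P ∣ v := by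
    have h1 : P ∣ 17 * v ^ 2 := by
      have : P ∣ u ^ 2 := Dvd.dvd.pow hu (by norm_num)
      have h2 : P ∣ 2 * P ^ 2 := ⟨2 * P, by ring⟩
      have : P ∣ 2 * P ^ 2 - u ^ 2 := dvd_sub h2 this
      rwa [show 2 * P ^ 2 - u ^ 2 = 17 * v ^ 2 by linarith] at this
    rcases hP.dvd_mul.mp h1 with h | h
    · exact absurd h h17
    · exact hP.dvd_of_dvd_pow h
  obtain ⟨U, rfl⟩ := hu
  obtain ⟨V, rfl⟩ := hPv
  have hP0 : P ^ 2 ≠ 0 := pow_ne_zero _ hP.ne_zero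
  have hUV : U ^ 2 + 17 * V ^ 2 = 2 := by
    have := mul_left_cancel₀ hP0 (show P ^ 2 * (U ^ 2 + 17 * V ^ 2) = P ^ 2 * 2 by
      linear_combination h)
    linarith
  have hV : V = 0 := by nlinarith [sq_nonneg U, sq_nonneg V]
  have hU2 : U ^ 2 = 2 := by rw [hV] at hUV; linarith
  have hb1 : -2 ≤ U := by nlinarith
  have hb2 : U ≤ 2 := by nlinarith
  interval_cases U <;> omega

theorem stmt_17 (p : ℕ) (hp : p.Prime) (hp17 : 17 < p) :
    ¬((∃ a b : ℕ, 0 < a ∧ 0 < b ∧ p = a ^ 2 + 17 * b ^ 2) ∧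
      (∃ x y : ℕ, 0 < x ∧ 0 < y ∧ 2 * p = x ^ 2 + 17 * y ^ 2)) := by
  rintro ⟨⟨a, b, ha, hb, hab⟩, ⟨x, y, hx, hy, hxy⟩⟩
  have hP : Prime (p : ℤ) := Int.prime_iff_natAbs_prime.mpr (by simpa using hp)
  have h17 : ¬ (p : ℤ) ∣ 17 := by
    intro h
    have : p ∣ 17 := by exact_mod_cast h
    have := Nat.le_of_dvd (by norm_num) this
    omega
  have h1 : (a : ℤ) ^ 2 + 17 * (b : ℤ) ^ 2 = (p : ℤ) := by push_cast [hab]; ring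
  have h2 : (x : ℤ) ^ 2 + 17 * (y : ℤ) ^ 2 = 2 * (p : ℤ) := by
    have h := hxy; zify at h; linarith
  set A := (a : ℤ); set B := (b : ℤ); set X := (x : ℤ); set Y := (y : ℤ)
  have hprod : (A * X - 17 * B * Y) * (A * X + 17 * B * Y)
      = (p : ℤ) * (2 * A ^ 2 - 17 * Y ^ 2) := by
    linear_combination A ^ 2 * h2 - 17 * Y ^ 2 * h1
  have hd : (p : ℤ) ∣ (A * X - 17 * B * Y) * (A * X + 17 * B * Y) :=
    ⟨2 * A ^ 2 - 17 * Y ^ 2, hprod⟩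
  rcases hP.dvd_mul.mp hd with h | h
  · exact aux_key (p : ℤ) (A * X - 17 * B * Y) (A * Y + B * X) hP h17 h
      (by linear_combination (X ^ 2 + 17 * Y ^ 2) * h1 + (p : ℤ) * h2)
  · exact aux_key (p : ℤ) (A * X + 17 * B * Y) (A * Y - B * X) hP h17 h
      (by linear_combination (X ^ 2 + 17 * Y ^ 2) * h1 + (p : ℤ) * h2)
end

section
/- For an odd prime p, there exists an integer x with x⁸ ≡ −4 (mod p) and p ≡ 1 (mod 8) if and only if there exist integers x, y with x² ≡ −1 (mod p) and (y² − 1)² ≡ −1 (mod p) and p ≡ 1 (mod 8). -/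
theorem stmt_18 (p : ℕ) (hp : p.Prime) (hodd : Odd p) :
    ((∃ x : ℤ, x ^ 8 ≡ -4 [ZMOD p]) ∧ p % 8 = 1) ↔
    ((∃ x y : ℤ, x ^ 2 ≡ -1 [ZMOD p] ∧ (y ^ 2 - 1) ^ 2 ≡ -1 [ZMOD p]) ∧ p % 8 = 1) := by
  haveI : Fact p.Prime := ⟨hp⟩
  have cast_iff : ∀ a b : ℤ, a ≡ b [ZMOD p] ↔ ((a : ZMod p) = (b : ZMod p)) := by
    intro a b
    exact (ZMod.intCast_eq_intCast_iff a b p).symm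
  constructor
  · rintro ⟨⟨x, hx⟩, h8⟩
    refine ⟨?_, h8⟩
    have h4 : p % 4 ≠ 3 := by omega
    obtain ⟨r, hr⟩ := (ZMod.exists_sq_eq_neg_one_iff (p := p)).2 h4
    have hr2 : r ^ 2 = -1 := by linear_combination -hr
    have hx' : (x : ZMod p) ^ 8 = -4 := by
      have := (cast_iff _ _).1 hx
      push_cast at this
      exact this
    set X : ZMod p := (x : ZMod p) with hX
    have hfac : (X ^ 4 - 2 * X ^ 2 + 2) * (X ^ 4 + 2 * X ^ 2 + 2) = 0 := by
      linear_combination hx'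
    -- x-witness for x^2 ≡ -1 : lift r
    have hxw : ∃ x : ℤ, x ^ 2 ≡ -1 [ZMOD p] := by
      refine ⟨(r.val : ℤ), (cast_iff _ _).2 ?_⟩
      push_cast
      rw [ZMod.natCast_val, ZMod.cast_id]
      exact hr2
    obtain ⟨xw, hxw'⟩ := hxw
    rcases mul_eq_zero.1 hfac with hcase | hcase
    · refine ⟨xw, x, hxw', (cast_iff _ _).2 ?_⟩
      push_cast
      linear_combination hcase
    · refine ⟨xw, (r.val : ℤ) * x, hxw', (cast_iff _ _).2 ?_⟩
      push_cast
      rw [ZMod.natCast_val, ZMod.cast_id]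
      linear_combination hcase + ((r ^ 2 - 1) * X ^ 4 - 2 * X ^ 2) * hr2
  · rintro ⟨⟨x, y, hx, hy⟩, h8⟩
    refine ⟨⟨y, ?_⟩, h8⟩
    have hy' : ((y : ZMod p) ^ 2 - 1) ^ 2 = -1 := by
      have := (cast_iff _ _).1 hy
      push_cast at this
      exact this
    refine (cast_iff _ _).2 ?_
    push_cast
    linear_combination ((y : ZMod p) ^ 4 + 2 * (y : ZMod p) ^ 2 + 2) * hy'
end
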